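/- arXiv:1705.08493 — 14 statements merged into one kernel-verified Lean document; each statement's English description precedes it below -/
import Mathlib

section
/- Let B be a left brace. Define d_1(B) = B*B (the additive subgroup of B generated by all elements a*b with a,b ∈ B) and d_{i+1}(B) = d_i(B)*d_i(B) (the additive subgroup generated by all x*y with x,y ∈ d_i(B)). Then B is a solvable left brace if and only if d_k(B) = {0} for some positive integer k. -/
/-- A sub-brace of a left brace `B`: a subset closed under addition, additive inverses,
multiplication and multiplicative inverses (hence itself a left brace). -/
def IsSubBrace {B : Type*} [AddCommGroup B] [Group B] (H : Set B) : Prop :=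
  (0 : B) ∈ H ∧ (∀ x ∈ H, ∀ y ∈ H, x + y ∈ H) ∧ (∀ x ∈ H, -x ∈ H) ∧
    (∀ x ∈ H, ∀ y ∈ H, x * y ∈ H) ∧ (∀ x ∈ H, x⁻¹ ∈ H)

/-- `IsSolvableIn S` expresses that the sub-brace `S` of `B` is a solvable left brace:
there is a chain `{0} = C 0 ⊆ C 1 ⊆ ⋯ ⊆ C m = S` of sub-braces such that each `C i`
is an ideal of the left brace `C (i+1)` (normal in its multiplicative group and closed
under its lambda maps `y ↦ x·y − x`) with trivial quotient, i.e. `x*y := x·y − x − y`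
lies in `C i` for all `x, y ∈ C (i+1)`. -/
def IsSolvableIn {B : Type*} [AddCommGroup B] [Group B] (S : Set B) : Prop :=
  ∃ (m : ℕ) (C : ℕ → Set B),
    C 0 = {(0 : B)} ∧ C m = S ∧ (∀ i ≤ m, IsSubBrace (C i)) ∧
    ∀ i < m,
      C i ⊆ C (i + 1) ∧
      (∀ x ∈ C (i + 1), ∀ y ∈ C i, x * y * x⁻¹ ∈ C i) ∧
      (∀ x ∈ C (i + 1), ∀ y ∈ C i, x * y - x ∈ C i) ∧
      (∀ x ∈ C (i + 1), ∀ y ∈ C (i + 1), x * y - x - y ∈ C i)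

/-- The additive subgroup of `B` generated by all `x*y := x·y − x − y` with `x ∈ X`, `y ∈ Y`. -/
def starSpan (B : Type*) [AddCommGroup B] [Group B] (X Y : Set B) : AddSubgroup B :=
  AddSubgroup.closure {z : B | ∃ x ∈ X, ∃ y ∈ Y, z = x * y - x - y}

/-- The series `d` of Statement 0, with `dSeries B k` corresponding to `d_{k+1}(B)`:
`d_1(B) = B*B` and `d_{i+1}(B) = d_i(B)*d_i(B)`. -/
def dSeries (B : Type*) [AddCommGroup B] [Group B] : ℕ → AddSubgroup B
  | 0 => starSpan B Set.univ Set.univ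
  | k + 1 => starSpan B (dSeries B k) (dSeries B k)

set_option linter.unusedSectionVars false

section Aux
variable {B : Type*} [AddCommGroup B] [Group B]

def IsSubBrace.addSubgroup {S : Set B} (h : IsSubBrace S) : AddSubgroup B where
  carrier := S
  zero_mem' := h.1
  add_mem' := fun {a b} ha hb => h.2.1 a ha b hb
  neg_mem' := fun {a} ha => h.2.2.1 a ha

@[simp] lemma IsSubBrace.mem_addSubgroup {S : Set B} (h : IsSubBrace S) {x : B} :
    x ∈ h.addSubgroup ↔ x ∈ S := Iff.rfl

lemma isSubBrace_univ : IsSubBrace (Set.univ : Set B) := by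
  refine ⟨trivial, ?_, ?_, ?_, ?_⟩ <;> intros <;> trivial

lemma mem_starSpan_of_star {X Y : Set B} {x y : B} (hx : x ∈ X) (hy : y ∈ Y) :
    x * y - x - y ∈ starSpan B X Y :=
  AddSubgroup.subset_closure ⟨x, hx, y, hy, rfl⟩

variable (hB : ∀ a b c : B, a * (b + c) + a = a * b + a * c)

include hB

lemma one_eq_zero' : (1 : B) = 0 := by
  have h := hB 1 0 0
  simpa using h

def lamHom (a : B) : B →+ B :=
  AddMonoidHom.mk' (fun z => a * z - a) (fun b c => by
    show a * (b + c) - a = (a * b - a) + (a * c - a)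
    have h : a * (b + c) = a * b + a * c - a := eq_sub_of_add_eq (hB a b c)
    rw [h]; abel)

@[simp] lemma lamHom_apply (a z : B) : lamHom hB a z = a * z - a := rfl

lemma lam_star (a x y : B) :
    a * (x * y - x - y) - a = ((a * x) * y - a * x - y) - (a * y - a - y) := by
  have h : lamHom hB a (x * y - x - y)
      = lamHom hB a (x * y) - lamHom hB a x - lamHom hB a y := by
    rw [map_sub, map_sub]
  simp only [lamHom_apply] at h
  rw [h, ← mul_assoc]
  abel

lemma conj_eq (x y : B) :
    x * y * x⁻¹ = ((x * y) * x⁻¹ - x * y - x⁻¹) - (x⁻¹ * x - x⁻¹ - x)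
      + (x * y - x - y) + y := by
  rw [inv_mul_cancel, one_eq_zero' hB]
  abel

variable {S : Set B} (hS : IsSubBrace S)

include hS

lemma starSpan_subset : (starSpan B S S : Set B) ⊆ S := by
  have h : starSpan B S S ≤ hS.addSubgroup := by
    apply AddSubgroup.closure_le _ |>.mpr
    rintro z ⟨x, hx, y, hy, rfl⟩
    show x * y - x - y ∈ S
    have hxy : x * y ∈ S := hS.2.2.2.1 x hx y hy
    have h1 : x * y - x ∈ S := by
      rw [sub_eq_add_neg]; exact hS.2.1 _ hxy _ (hS.2.2.1 x hx)
    rw [sub_eq_add_neg]; exact hS.2.1 _ h1 _ (hS.2.2.1 y hy)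
  exact fun z hz => h hz

lemma starSpan_lam : ∀ a ∈ S, ∀ z ∈ starSpan B S S, a * z - a ∈ starSpan B S S := by
  intro a ha z hz
  have key : starSpan B S S ≤ (starSpan B S S).comap (lamHom hB a) := by
    apply AddSubgroup.closure_le _ |>.mpr
    rintro w ⟨x, hx, y, hy, rfl⟩
    simp only [Set.mem_preimage, AddSubgroup.coe_comap, SetLike.mem_coe,
      AddSubgroup.mem_comap, lamHom_apply]
    rw [lam_star hB]
    exact sub_mem (mem_starSpan_of_star (hS.2.2.2.1 a ha x hx) hy)
      (mem_starSpan_of_star ha hy)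
  exact key hz

lemma starSpan_isSubBrace : IsSubBrace (starSpan B S S : Set B) := by
  have hsub := starSpan_subset hB hS
  have hlam := starSpan_lam hB hS
  refine ⟨zero_mem _, fun x hx y hy => add_mem hx hy, fun x hx => neg_mem hx, ?_, ?_⟩
  · intro u hu v hv
    have h1 : u * v - u ∈ starSpan B S S := hlam u (hsub hu) v hv
    have h2 : u * v = (u * v - u) + u := by abel
    rw [h2]; exact add_mem h1 hu
  · intro u hu
    have hu' : u ∈ S := hsub hu
    have h1 : u⁻¹ * u - u⁻¹ ∈ starSpan B S S := hlam u⁻¹ (hS.2.2.2.2 u hu') u hu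
    have h2 : u⁻¹ * u - u⁻¹ = -u⁻¹ := by
      rw [inv_mul_cancel, one_eq_zero' hB]; abel
    rw [h2] at h1
    simpa using neg_mem h1

lemma starSpan_conj : ∀ x ∈ S, ∀ y ∈ starSpan B S S, x * y * x⁻¹ ∈ starSpan B S S := by
  intro x hx y hy
  have hy' : y ∈ S := starSpan_subset hB hS hy
  rw [conj_eq hB]
  exact add_mem (add_mem (sub_mem
      (mem_starSpan_of_star (hS.2.2.2.1 x hx y hy') (hS.2.2.2.2 x hx))
      (mem_starSpan_of_star (hS.2.2.2.2 x hx) hx))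
    (mem_starSpan_of_star hx hy')) hy

end Aux

section Main
variable {B : Type*} [AddCommGroup B] [Group B]
  (hB : ∀ a b c : B, a * (b + c) + a = a * b + a * c)

include hB

lemma dSeries_isSubBrace : ∀ k, IsSubBrace (dSeries B k : Set B)
  | 0 => starSpan_isSubBrace hB isSubBrace_univ
  | k + 1 => starSpan_isSubBrace hB (dSeries_isSubBrace k)

end Main

/-- a left brace `B` is solvable if and only if `d_k(B) = {0}` for some
positive integer `k`. -/
theorem solvable_iff_dSeries_eq_bot (B : Type*) [AddCommGroup B] [Group B]
    (hB : ∀ a b c : B, a * (b + c) + a = a * b + a * c) :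
    IsSolvableIn (Set.univ : Set B) ↔ ∃ k : ℕ, dSeries B k = ⊥ := by
  constructor
  · rintro ⟨m, C, h0, hm, hsub, hstep⟩
    rcases Nat.eq_zero_or_pos m with hm0 | hmpos
    · -- B is trivial
      subst hm0
      have hall : ∀ x : B, x = 0 := by
        intro x
        have : x ∈ C 0 := by rw [hm]; trivial
        rwa [h0] at this
      refine ⟨0, ?_⟩
      ext x
      rw [hall x]
      simp only [AddSubgroup.mem_bot]
      exact iff_of_true (zero_mem _) trivial
    · obtain ⟨j, rfl⟩ : ∃ j, m = j + 1 := ⟨m - 1, by omega⟩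
      have key : ∀ i, i ≤ j → (dSeries B i : Set B) ⊆ C (j - i) := by
        intro i
        induction i with
        | zero =>
          intro _
          have hA : dSeries B 0 ≤ (hsub j (by omega)).addSubgroup := by
            apply AddSubgroup.closure_le _ |>.mpr
            rintro z ⟨x, -, y, -, rfl⟩
            have hx : x ∈ C (j + 1) := by rw [hm]; trivial
            have hy : y ∈ C (j + 1) := by rw [hm]; trivial
            exact (hstep j (by omega)).2.2.2 x hx y hy
          exact fun z hz => hA hz
        | succ i ih =>
          intro hij
          have hprev := ih (by omega)
          have hji : j - i = (j - (i + 1)) + 1 := by omega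
          have hA : dSeries B (i + 1) ≤ (hsub (j - (i+1)) (by omega)).addSubgroup := by
            apply AddSubgroup.closure_le _ |>.mpr
            rintro z ⟨x, hx, y, hy, rfl⟩
            have hx' : x ∈ C (j - i) := hprev hx
            have hy' : y ∈ C (j - i) := hprev hy
            rw [hji] at hx' hy'
            exact (hstep (j - (i+1)) (by omega)).2.2.2 x hx' y hy'
          exact fun z hz => hA hz
      refine ⟨j, ?_⟩
      have h1 : (dSeries B j : Set B) ⊆ C 0 := by
        have := key j le_rfl
        rwa [Nat.sub_self] at this
      rw [h0] at h1
      rw [eq_bot_iff]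
      intro x hx
      have : x ∈ ({(0 : B)} : Set B) := h1 hx
      simpa using this
  · rintro ⟨k, hk⟩
    refine ⟨k + 1, fun i => if i ≤ k then (dSeries B (k - i) : Set B) else Set.univ,
      ?_, ?_, ?_, ?_⟩
    · simp only [Nat.zero_le, if_pos, Nat.sub_zero]
      rw [hk]
      rfl
    · simp
    · intro i _
      by_cases hik : i ≤ k
      · simpa [hik] using dSeries_isSubBrace hB (k - i)
      · simpa [hik] using isSubBrace_univ
    · intro i hi
      by_cases hik : i < k
      · -- both levels are dSeries
        have h1 : i ≤ k := le_of_lt hik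
        have h2 : i + 1 ≤ k := hik
        have hji : k - i = (k - (i + 1)) + 1 := by omega
        simp only [if_pos h1, if_pos h2]
        set S : Set B := (dSeries B (k - (i + 1)) : Set B) with hSdef
        have hS : IsSubBrace S := dSeries_isSubBrace hB _
        have hD : (dSeries B (k - i) : Set B) = (starSpan B S S : Set B) := by
          rw [hji]; rfl
        rw [hD]
        exact ⟨starSpan_subset hB hS, starSpan_conj hB hS, starSpan_lam hB hS,
          fun x hx y hy => mem_starSpan_of_star hx hy⟩
      · -- i = k : top level is univ
        have hik' : i = k := by omega
        subst hik'
        have h2 : ¬ (i + 1 ≤ i) := by omega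
        simp only [le_refl, if_pos, if_neg h2, Nat.sub_self]
        have hS : IsSubBrace (Set.univ : Set B) := isSubBrace_univ
        have hD : (dSeries B 0 : Set B) = (starSpan B Set.univ Set.univ : Set B) := rfl
        rw [hD]
        exact ⟨fun z _ => trivial, starSpan_conj hB hS, starSpan_lam hB hS,
          fun x hx y hy => mem_starSpan_of_star hx hy⟩
end

section
/- Every sub-brace of a solvable left brace is a solvable left brace. -/
/-- every sub-brace of a solvable left brace is a solvable left brace. -/
theorem subBrace_of_solvable_is_solvable (B : Type*) [AddCommGroup B] [Group B]
    (hB : ∀ a b c : B, a * (b + c) + a = a * b + a * c)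
    (hsolv : IsSolvableIn (Set.univ : Set B))
    (H : Set B) (hH : IsSubBrace H) :
    IsSolvableIn H := by
  obtain ⟨m, C, hC0, hCm, hCsub, hchain⟩ := hsolv
  obtain ⟨h0, hadd, hneg, hmul, hinv⟩ := hH
  refine ⟨m, fun i => C i ∩ H, ?_, ?_, ?_, ?_⟩
  · show C 0 ∩ H = {0}
    rw [hC0]
    ext x
    simp only [Set.mem_inter_iff, Set.mem_singleton_iff]
    exact ⟨fun h => h.1, fun h => ⟨h, h ▸ h0⟩⟩
  · show C m ∩ H = H
    rw [hCm]; simp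
  · intro i hi
    obtain ⟨c0, cadd, cneg, cmul, cinv⟩ := hCsub i hi
    exact ⟨⟨c0, h0⟩,
      fun x hx y hy => ⟨cadd x hx.1 y hy.1, hadd x hx.2 y hy.2⟩,
      fun x hx => ⟨cneg x hx.1, hneg x hx.2⟩,
      fun x hx y hy => ⟨cmul x hx.1 y hy.1, hmul x hx.2 y hy.2⟩,
      fun x hx => ⟨cinv x hx.1, hinv x hx.2⟩⟩
  · intro i hi
    obtain ⟨hsub, hconj, hlam, hstar⟩ := hchain i hi
    refine ⟨fun x hx => ⟨hsub hx.1, hx.2⟩, ?_, ?_, ?_⟩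
    · exact fun x hx y hy => ⟨hconj x hx.1 y hy.1,
        hmul _ (hmul x hx.2 y hy.2) _ (hinv x hx.2)⟩
    · intro x hx y hy
      refine ⟨hlam x hx.1 y hy.1, ?_⟩
      have : x * y - x = x * y + -x := sub_eq_add_neg _ _
      rw [this]
      exact hadd _ (hmul x hx.2 y hy.2) _ (hneg x hx.2)
    · intro x hx y hy
      refine ⟨hstar x hx.1 y hy.1, ?_⟩
      have : x * y - x - y = x * y + -x + -y := by
        rw [sub_eq_add_neg, sub_eq_add_neg]
      rw [this]
      exact hadd _ (hadd _ (hmul x hx.2 y hy.2) _ (hneg x hx.2)) _ (hneg y hy.2)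
end

section
/- Let T and S be left braces. Let b : T×T → S be a symmetric 2-cocycle on (T,+) with values in (S,+), and let α : (S,·) → Aut(T,+,·) be a homomorphism of groups into the group of brace automorphisms of T, writing α_s = α(s), such that s·b(t₂,t₃) + b(t₁·α_s(t₂+t₃), t₁) = b(t₁·α_s(t₂), t₁·α_s(t₃)) + s for all s ∈ S and t₁,t₂,t₃ ∈ T. Then the operations (t₁,s₁)+(t₂,s₂) = (t₁+t₂, s₁+s₂+b(t₁,t₂)) and (t₁,s₁)·(t₂,s₂) = (t₁·α_{s₁}(t₂), s₁·s₂) define a left brace structure on the set T×S (called the asymmetric product T⋊∘S of T by S via b and α). -/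
/-- Catino–Colazzo–Stefanelli: given left braces `T` and `S`, a symmetric
2-cocycle `b : T×T → S` on `(T,+)` with values in `(S,+)`, and a group homomorphism
`α : (S,·) → Aut(T,+,·)` satisfying the compatibility condition, the displayed addition
and multiplication define a left brace structure on `T × S` (the asymmetric product). -/
theorem asymmetric_product_is_left_brace
    {T S : Type*} [AddCommGroup T] [Group T] [AddCommGroup S] [Group S]
    (hT : ∀ a b c : T, a * (b + c) + a = a * b + a * c)
    (hS : ∀ a b c : S, a * (b + c) + a = a * b + a * c)
    (b : T → T → S)
    (hb0 : b 0 0 = 0)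
    (hbsymm : ∀ t₁ t₂ : T, b t₁ t₂ = b t₂ t₁)
    (hbcoc : ∀ t₁ t₂ t₃ : T, b (t₁ + t₂) t₃ + b t₁ t₂ = b t₁ (t₂ + t₃) + b t₂ t₃)
    (α : S → T → T)
    (hαbij : ∀ s : S, Function.Bijective (α s))
    (hαadd : ∀ (s : S) (t₁ t₂ : T), α s (t₁ + t₂) = α s t₁ + α s t₂)
    (hαmul : ∀ (s : S) (t₁ t₂ : T), α s (t₁ * t₂) = α s t₁ * α s t₂)
    (hαone : α 1 = id)
    (hαhom : ∀ s₁ s₂ : S, α (s₁ * s₂) = α s₁ ∘ α s₂)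
    (hcomp : ∀ (s : S) (t₁ t₂ t₃ : T),
      s * b t₂ t₃ + b (t₁ * α s (t₂ + t₃)) t₁ = b (t₁ * α s t₂) (t₁ * α s t₃) + s) :
    let add : T × S → T × S → T × S := fun x y => (x.1 + y.1, x.2 + y.2 + b x.1 y.1)
    let mul : T × S → T × S → T × S := fun x y => (x.1 * α x.2 y.1, x.2 * y.2)
    -- (T×S, add) is an abelian group:
    (∀ x y, add x y = add y x) ∧
    (∀ x y z, add (add x y) z = add x (add y z)) ∧
    (∀ x, add x ((0 : T), (0 : S)) = x) ∧
    (∀ x, ∃ y, add x y = ((0 : T), (0 : S))) ∧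
    -- (T×S, mul) is a group:
    (∀ x y z, mul (mul x y) z = mul x (mul y z)) ∧
    (∀ x, mul ((1 : T), (1 : S)) x = x) ∧
    (∀ x, mul x ((1 : T), (1 : S)) = x) ∧
    (∀ x, ∃ y, mul x y = ((1 : T), (1 : S)) ∧ mul y x = ((1 : T), (1 : S))) ∧
    -- the left brace compatibility law:
    (∀ a x y, add (mul a (add x y)) a = add (mul a x) (mul a y)) := by

  intro add mul
  -- auxiliary facts
  have hb0' : ∀ t : T, b t 0 = 0 := by
    intro t
    have h := hbcoc t 0 0
    simp [hb0] at h
    exact h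
  have hα1 : ∀ s : S, α s 1 = 1 := by
    intro s
    have h := hαmul s 1 1
    rw [one_mul] at h
    exact (left_eq_mul.mp h)
  have hαinv : ∀ (s : S) (u : T), α s (α s⁻¹ u) = u := by
    intro s u
    have h := congrFun (hαhom s s⁻¹) u
    rw [mul_inv_cancel, hαone] at h
    exact h.symm
  refine ⟨?_, ?_, ?_, ?_, ?_, ?_, ?_, ?_, ?_⟩
  · intro x y
    simp only [add, Prod.mk.injEq]
    exact ⟨add_comm _ _, by rw [hbsymm x.1 y.1]; abel⟩
  · intro x y z
    simp only [add, Prod.mk.injEq]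
    refine ⟨add_assoc _ _ _, ?_⟩
    calc x.2 + y.2 + b x.1 y.1 + z.2 + b (x.1 + y.1) z.1
        = (b (x.1 + y.1) z.1 + b x.1 y.1) + (x.2 + y.2 + z.2) := by abel
      _ = (b x.1 (y.1 + z.1) + b y.1 z.1) + (x.2 + y.2 + z.2) := by rw [hbcoc]
      _ = x.2 + (y.2 + z.2 + b y.1 z.1) + b x.1 (y.1 + z.1) := by abel
  · intro x
    simp [add, hb0']
  · intro x
    refine ⟨(-x.1, -x.2 - b x.1 (-x.1)), ?_⟩
    simp only [add, Prod.mk.injEq]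
    constructor
    · abel
    · abel
  · intro x y z
    simp only [mul, Prod.mk.injEq]
    refine ⟨?_, (mul_assoc _ _ _)⟩
    rw [hαhom, hαmul, mul_assoc]
    rfl
  · intro x
    simp [mul, hαone]
  · intro x
    simp [mul, hα1]
  · intro x
    refine ⟨(α x.2⁻¹ x.1⁻¹, x.2⁻¹), ?_, ?_⟩
    · simp only [mul, Prod.mk.injEq]
      exact ⟨by rw [hαinv, mul_inv_cancel], by rw [mul_inv_cancel]⟩
    · simp only [mul, Prod.mk.injEq]
      refine ⟨?_, by rw [inv_mul_cancel]⟩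
      rw [← hαmul, inv_mul_cancel, hα1]
  · intro a x y
    simp only [add, mul, Prod.mk.injEq]
    constructor
    · rw [hαadd, hT]
    · calc a.2 * (x.2 + y.2 + b x.1 y.1) + a.2 + b (a.1 * α a.2 (x.1 + y.1)) a.1
          = (a.2 * ((x.2 + y.2) + b x.1 y.1) + a.2) + b (a.1 * α a.2 (x.1 + y.1)) a.1 := by
            abel
        _ = (a.2 * (x.2 + y.2) + a.2 * b x.1 y.1) + b (a.1 * α a.2 (x.1 + y.1)) a.1 := by
            rw [hS]
        _ = a.2 * (x.2 + y.2) + (a.2 * b x.1 y.1 + b (a.1 * α a.2 (x.1 + y.1)) a.1) := by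
            abel
        _ = a.2 * (x.2 + y.2) + (b (a.1 * α a.2 x.1) (a.1 * α a.2 y.1) + a.2) := by
            rw [hcomp]
        _ = (a.2 * (x.2 + y.2) + a.2) + b (a.1 * α a.2 x.1) (a.1 * α a.2 y.1) := by abel
        _ = (a.2 * x.2 + a.2 * y.2) + b (a.1 * α a.2 x.1) (a.1 * α a.2 y.1) := by rw [hS]
end

section
/- Let T and S be left braces, let b : T×T → S be a symmetric map that is additive in each variable (a symmetric bilinear form), and let α : (S,·) → Aut(T,+,·) be a group homomorphism into the brace automorphisms of T, with α_s = α(s). Then the asymmetric product compatibility condition, s·b(t₂,t₃) + b(t₁·α_s(t₂+t₃), t₁) = b(t₁·α_s(t₂), t₁·α_s(t₃)) + s for all s ∈ S and t₁,t₂,t₃ ∈ T, holds if and only if both of the following hold: λ_s(b(t₂,t₃)) = b(α_s(t₂), α_s(t₃)) for all s ∈ S, t₂,t₃ ∈ T, and b(t₂,t₃) = b(λ_{t₁}(t₂), λ_{t₁}(t₃)) for all t₁,t₂,t₃ ∈ T. -/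
/-!
Expanding `t₁ * (x + y) = t₁ * x + t₁ * y - t₁` with the bilinearity and symmetry of `b` gives
`b (t₁ x) (t₁ y) = b (λ_{t₁} x) (λ_{t₁} y) + b (t₁ (x + y)) t₁`, so the compatibility condition
says exactly `λ_s (b t₂ t₃) = b (λ_{t₁} (α_s t₂)) (λ_{t₁} (α_s t₃))` for all `s, t₁, t₂, t₃`.
In a left brace `1 = 0`, hence `λ_1 = id`; taking `t₁ = 1` and `s = 1` gives the two conditions,
and conversely the second one applied to `α_s t₂, α_s t₃` composes with the first.
-/

namespace LeftBrace

section Brace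

variable {B : Type*} [AddCommGroup B] [Group B]
  (hB : ∀ a b c : B, a * (b + c) + a = a * b + a * c)
include hB

theorem one_eq_zero : (1 : B) = 0 := by
  simpa using hB 1 0 0

theorem one_mul_sub_one (x : B) : 1 * x - 1 = x := by
  rw [one_mul, one_eq_zero hB, sub_zero]

theorem mul_add_eq (a x y : B) : a * (x + y) = a * x + a * y - a :=
  eq_sub_of_add_eq (hB a x y)

end Brace

section Bilinear

variable {T S : Type*} [AddCommGroup T] [AddCommGroup S] (b : T → T → S)

theorem bilin_sub_left (hbadd : ∀ t₁ t₂ t₃ : T, b (t₁ + t₂) t₃ = b t₁ t₃ + b t₂ t₃)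
    (x y z : T) : b (x - y) z = b x z - b y z :=
  (AddMonoidHom.mk' (fun x => b x z) fun x y => hbadd x y z).map_sub x y

theorem bilin_sub_right (hbsymm : ∀ t₁ t₂ : T, b t₁ t₂ = b t₂ t₁)
    (hbadd : ∀ t₁ t₂ t₃ : T, b (t₁ + t₂) t₃ = b t₁ t₃ + b t₂ t₃) (x y z : T) :
    b z (x - y) = b z x - b z y := by
  rw [hbsymm, bilin_sub_left b hbadd, hbsymm x, hbsymm y]

theorem bilin_mul_mul [Group T] (hT : ∀ a b c : T, a * (b + c) + a = a * b + a * c)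
    (hbsymm : ∀ t₁ t₂ : T, b t₁ t₂ = b t₂ t₁)
    (hbadd : ∀ t₁ t₂ t₃ : T, b (t₁ + t₂) t₃ = b t₁ t₃ + b t₂ t₃) (a x y : T) :
    b (a * x) (a * y) = b (a * x - a) (a * y - a) + b (a * (x + y)) a := by
  rw [mul_add_eq hT]
  simp only [bilin_sub_left b hbadd, bilin_sub_right b hbsymm hbadd, hbadd]
  rw [hbsymm (a * y) a]
  abel

end Bilinear

end LeftBrace

theorem asymmetric_product_condition_iff_general
    {T S : Type*} [AddCommGroup T] [Group T] [AddCommGroup S] [Group S]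
    (hT : ∀ a b c : T, a * (b + c) + a = a * b + a * c)
    (hS : ∀ a b c : S, a * (b + c) + a = a * b + a * c)
    (b : T → T → S)
    (hbsymm : ∀ t₁ t₂ : T, b t₁ t₂ = b t₂ t₁)
    (hbadd : ∀ t₁ t₂ t₃ : T, b (t₁ + t₂) t₃ = b t₁ t₃ + b t₂ t₃)
    (α : S → T → T)
    (hαadd : ∀ (s : S) (t₁ t₂ : T), α s (t₁ + t₂) = α s t₁ + α s t₂)
    (hαone : α 1 = id) :
    (∀ (s : S) (t₁ t₂ t₃ : T),
        s * b t₂ t₃ + b (t₁ * α s (t₂ + t₃)) t₁ = b (t₁ * α s t₂) (t₁ * α s t₃) + s) ↔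
      ((∀ (s : S) (t₂ t₃ : T), s * b t₂ t₃ - s = b (α s t₂) (α s t₃)) ∧
       (∀ t₁ t₂ t₃ : T, b t₂ t₃ = b (t₁ * t₂ - t₁) (t₁ * t₃ - t₁))) := by
  have condition_iff : ∀ (s : S) (t₁ t₂ t₃ : T),
      s * b t₂ t₃ + b (t₁ * α s (t₂ + t₃)) t₁ = b (t₁ * α s t₂) (t₁ * α s t₃) + s ↔
        s * b t₂ t₃ - s = b (t₁ * α s t₂ - t₁) (t₁ * α s t₃ - t₁) := by
    intro s t₁ t₂ t₃
    rw [hαadd, LeftBrace.bilin_mul_mul b hT hbsymm hbadd, sub_eq_iff_eq_add,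
      add_right_comm _ _ s, add_left_inj]
  simp_rw [condition_iff]
  constructor
  · intro h
    refine ⟨fun s t₂ t₃ => ?_, fun t₁ t₂ t₃ => ?_⟩
    · simpa only [LeftBrace.one_mul_sub_one hT] using h s 1 t₂ t₃
    · simpa only [hαone, id, LeftBrace.one_mul_sub_one hS] using h 1 t₁ t₂ t₃
  · rintro ⟨hα, hlambda⟩ s t₁ t₂ t₃
    rw [hα]
    exact hlambda t₁ _ _

/-- for a symmetric bilinear form `b : T×T → S` and a group homomorphism
`α : (S,·) → Aut(T,+,·)`, the asymmetric product compatibility condition holds if and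
only if `λ_s(b(t₂,t₃)) = b(α_s(t₂),α_s(t₃))` and `b(t₂,t₃) = b(λ_{t₁}(t₂),λ_{t₁}(t₃))`,
where `λ_a(x) = a·x − a`. -/
theorem asymmetric_product_condition_iff
    {T S : Type*} [AddCommGroup T] [Group T] [AddCommGroup S] [Group S]
    (hT : ∀ a b c : T, a * (b + c) + a = a * b + a * c)
    (hS : ∀ a b c : S, a * (b + c) + a = a * b + a * c)
    (b : T → T → S)
    (hbsymm : ∀ t₁ t₂ : T, b t₁ t₂ = b t₂ t₁)
    (hbadd : ∀ t₁ t₂ t₃ : T, b (t₁ + t₂) t₃ = b t₁ t₃ + b t₂ t₃)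
    (α : S → T → T)
    (hαbij : ∀ s : S, Function.Bijective (α s))
    (hαadd : ∀ (s : S) (t₁ t₂ : T), α s (t₁ + t₂) = α s t₁ + α s t₂)
    (hαmul : ∀ (s : S) (t₁ t₂ : T), α s (t₁ * t₂) = α s t₁ * α s t₂)
    (hαone : α 1 = id)
    (hαhom : ∀ s₁ s₂ : S, α (s₁ * s₂) = α s₁ ∘ α s₂) :
    (∀ (s : S) (t₁ t₂ t₃ : T),
        s * b t₂ t₃ + b (t₁ * α s (t₂ + t₃)) t₁ = b (t₁ * α s t₂) (t₁ * α s t₃) + s) ↔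
      ((∀ (s : S) (t₂ t₃ : T), s * b t₂ t₃ - s = b (α s t₂) (α s t₃)) ∧
       (∀ t₁ t₂ t₃ : T, b t₂ t₃ = b (t₁ * t₂ - t₁) (t₁ * t₃ - t₁))) :=
  asymmetric_product_condition_iff_general hT hS b hbsymm hbadd α hαadd hαone
end

section
/- Let T⋊∘S be an asymmetric product of left braces T and S via a symmetric 2-cocycle b and a group homomorphism α : (S,·) → Aut(T,+,·) satisfying the asymmetric product compatibility condition. Then T×{0} is a normal subgroup of the multiplicative group (T×S, ·) of T⋊∘S, and {0}×S is a left ideal of T⋊∘S, i.e., an additive subgroup closed under all the maps λ_{(t,s)}. -/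
/-- in the asymmetric product `T⋊∘S`, the set `T×{0}` is a normal subgroup
of the multiplicative group, and `{0}×S` is a left ideal (an additive subgroup closed
under all the lambda maps `λ_a(x) = a·x − a`). -/
theorem asymmetric_product_normal_and_left_ideal
    {T S : Type*} [AddCommGroup T] [Group T] [AddCommGroup S] [Group S]
    (hT : ∀ a b c : T, a * (b + c) + a = a * b + a * c)
    (hS : ∀ a b c : S, a * (b + c) + a = a * b + a * c)
    (b : T → T → S)
    (hb0 : b 0 0 = 0)
    (hbsymm : ∀ t₁ t₂ : T, b t₁ t₂ = b t₂ t₁)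
    (hbcoc : ∀ t₁ t₂ t₃ : T, b (t₁ + t₂) t₃ + b t₁ t₂ = b t₁ (t₂ + t₃) + b t₂ t₃)
    (α : S → T → T)
    (hαbij : ∀ s : S, Function.Bijective (α s))
    (hαadd : ∀ (s : S) (t₁ t₂ : T), α s (t₁ + t₂) = α s t₁ + α s t₂)
    (hαmul : ∀ (s : S) (t₁ t₂ : T), α s (t₁ * t₂) = α s t₁ * α s t₂)
    (hαone : α 1 = id)
    (hαhom : ∀ s₁ s₂ : S, α (s₁ * s₂) = α s₁ ∘ α s₂)
    (hcomp : ∀ (s : S) (t₁ t₂ t₃ : T),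
      s * b t₂ t₃ + b (t₁ * α s (t₂ + t₃)) t₁ = b (t₁ * α s t₂) (t₁ * α s t₃) + s) :
    let add : T × S → T × S → T × S := fun x y => (x.1 + y.1, x.2 + y.2 + b x.1 y.1)
    let neg : T × S → T × S := fun x => (-x.1, -x.2 - b x.1 (-x.1))
    let mul : T × S → T × S → T × S := fun x y => (x.1 * α x.2 y.1, x.2 * y.2)
    let inv : T × S → T × S := fun x => (α x.2⁻¹ x.1⁻¹, x.2⁻¹)
    let N : Set (T × S) := {x | x.2 = 0}
    let L : Set (T × S) := {x | x.1 = 0}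
    -- T×{0} is a normal subgroup of (T×S, ·):
    (((1 : T), (1 : S)) ∈ N) ∧
    (∀ x ∈ N, ∀ y ∈ N, mul x y ∈ N) ∧
    (∀ x ∈ N, inv x ∈ N) ∧
    (∀ g : T × S, ∀ x ∈ N, mul (mul g x) (inv g) ∈ N) ∧
    -- {0}×S is a left ideal of T⋊∘S:
    (((0 : T), (0 : S)) ∈ L) ∧
    (∀ x ∈ L, ∀ y ∈ L, add x y ∈ L) ∧
    (∀ x ∈ L, neg x ∈ L) ∧
    (∀ a : T × S, ∀ x ∈ L, add (mul a x) (neg a) ∈ L) := by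
  have hS10 : (1 : S) = 0 := by
    have h := hS 1 0 0
    simp at h
    exact h
  have hT0 : ∀ a : T, a * 0 = a := by
    intro a
    have h := hT a 0 0
    rw [add_zero] at h
    exact (add_left_cancel h).symm
  have hα0 : ∀ s : S, α s 0 = 0 := by
    intro s
    have h := hαadd s 0 0
    rw [add_zero] at h
    exact left_eq_add.mp h
  intro add neg mul inv N L
  refine ⟨hS10, ?_, ?_, ?_, rfl, ?_, ?_, ?_⟩
  · intro x hx y hy
    simp only [N, Set.mem_setOf_eq] at *
    simp [mul, hx, hy, hS10]
  · intro x hx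
    simp only [N, Set.mem_setOf_eq] at *
    simp [inv, hx, ← hS10]
  · intro g x hx
    simp only [N, Set.mem_setOf_eq] at *
    simp [mul, inv, hx, ← hS10]
  · intro x hx y hy
    simp only [L, Set.mem_setOf_eq] at *
    simp [add, hx, hy]
  · intro x hx
    simp only [L, Set.mem_setOf_eq] at *
    simp [neg, hx]
  · intro a x hx
    simp only [L, Set.mem_setOf_eq] at *
    simp [add, neg, mul, hx, hα0, hT0]
end

section
/- Let S be a simple non-trivial left brace, let T be a trivial brace, and let T⋊∘S be an asymmetric product of T by S via a symmetric 2-cocycle b : T×T → S and a group homomorphism α : (S,·) → Aut(T,+) satisfying the asymmetric product compatibility condition. Suppose that for every t ∈ T with t ≠ 0 there exists t' ∈ T such that b(t,t') ≠ 0. Then T⋊∘S is a simple left brace if and only if Σ_{s∈S} im(α_s − id) = T, i.e., the additive subgroup of T generated by all elements α_s(t) − t (s ∈ S, t ∈ T) is all of T. -/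
/-- An ideal of the left brace `S`: a normal subgroup of `(S,·)` closed under all the
lambda maps `λ_b(x) = b·x − b`. -/
def IsIdealOfBrace {S : Type*} [AddCommGroup S] [Group S] (N : Set S) : Prop :=
  (1 : S) ∈ N ∧ (∀ x ∈ N, ∀ y ∈ N, x * y ∈ N) ∧ (∀ x ∈ N, x⁻¹ ∈ N) ∧
    (∀ g : S, ∀ x ∈ N, g * x * g⁻¹ ∈ N) ∧ (∀ b : S, ∀ x ∈ N, b * x - b ∈ N)

section AsymmetricProduct

variable {T S : Type*} [AddCommGroup T] [AddCommGroup S] [Group S]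

/-- Addition of the asymmetric product `T⋊∘S` of a trivial brace `T` by `S`. -/
def aAdd (b : T → T → S) (x y : T × S) : T × S := (x.1 + y.1, x.2 + y.2 + b x.1 y.1)

/-- Additive inverse in the asymmetric product. -/
def aNeg (b : T → T → S) (x : T × S) : T × S := (-x.1, -x.2 - b x.1 (-x.1))

/-- Multiplication of the asymmetric product `T⋊∘S` (the product of the trivial brace
`T` is its addition). -/
def aMul (α : S → T → T) (x y : T × S) : T × S := (x.1 + α x.2 y.1, x.2 * y.2)

/-- Multiplicative inverse in the asymmetric product. -/
def aInv (α : S → T → T) (x : T × S) : T × S := (α x.2⁻¹ (-x.1), x.2⁻¹)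

/-- An ideal of the asymmetric product `T⋊∘S`: a normal subgroup of its multiplicative
group closed under all the lambda maps `λ_a(x) = a·x − a`. -/
def IsIdealAsym (b : T → T → S) (α : S → T → T) (N : Set (T × S)) : Prop :=
  ((0 : T), (1 : S)) ∈ N ∧
  (∀ x ∈ N, ∀ y ∈ N, aMul α x y ∈ N) ∧
  (∀ x ∈ N, aInv α x ∈ N) ∧
  (∀ g : T × S, ∀ x ∈ N, aMul α (aMul α g x) (aInv α g) ∈ N) ∧
  (∀ a : T × S, ∀ x ∈ N, aAdd b (aMul α a x) (aNeg b a) ∈ N)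

end AsymmetricProduct

/-- let `S` be a simple non-trivial left brace, `T` a trivial brace, and
`T⋊∘S` an asymmetric product via a symmetric 2-cocycle `b` and a homomorphism
`α : (S,·) → Aut(T,+)` satisfying the compatibility condition.  If for every `t ≠ 0`
there is `t'` with `b(t,t') ≠ 0`, then `T⋊∘S` is simple if and only if
`Σ_{s∈S} im(α_s − id) = T`. -/
theorem asymmetric_product_simple_iff
    {T S : Type*} [AddCommGroup T] [AddCommGroup S] [Group S]
    (hS : ∀ a b c : S, a * (b + c) + a = a * b + a * c)
    (hSnontriv : ∃ a b : S, a * b ≠ a + b)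
    (hSsimple : ∀ N : Set S, IsIdealOfBrace N → N = {(0 : S)} ∨ N = Set.univ)
    (b : T → T → S)
    (hb0 : b 0 0 = 0)
    (hbsymm : ∀ t₁ t₂ : T, b t₁ t₂ = b t₂ t₁)
    (hbcoc : ∀ t₁ t₂ t₃ : T, b (t₁ + t₂) t₃ + b t₁ t₂ = b t₁ (t₂ + t₃) + b t₂ t₃)
    (α : S → T → T)
    (hαbij : ∀ s : S, Function.Bijective (α s))
    (hαadd : ∀ (s : S) (t₁ t₂ : T), α s (t₁ + t₂) = α s t₁ + α s t₂)
    (hαone : α 1 = id)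
    (hαhom : ∀ s₁ s₂ : S, α (s₁ * s₂) = α s₁ ∘ α s₂)
    (hcomp : ∀ (s : S) (t₁ t₂ t₃ : T),
      s * b t₂ t₃ + b (t₁ + α s (t₂ + t₃)) t₁ = b (t₁ + α s t₂) (t₁ + α s t₃) + s)
    (hnd : ∀ t : T, t ≠ 0 → ∃ t' : T, b t t' ≠ 0) :
    ((∃ x : T × S, x ≠ ((0 : T), (0 : S))) ∧
      ∀ N : Set (T × S), IsIdealAsym b α N → N = {((0 : T), (0 : S))} ∨ N = Set.univ) ↔
      AddSubgroup.closure {w : T | ∃ (s : S) (t : T), w = α s t - t} = ⊤ := by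
  -- basic consequences of the brace axiom in S
  have hmul0 : ∀ a : S, a * 0 = a := by
    intro a
    have h := hS a 0 0
    rw [add_zero] at h
    exact (add_left_cancel h).symm
  have h10 : (1 : S) = 0 := by
    have h := hmul0 1
    rw [one_mul] at h
    exact h.symm
  have hα0 : ∀ s : S, α s 0 = 0 := by
    intro s
    have h := hαadd s 0 0
    rw [add_zero] at h
    nth_rewrite 1 [← add_zero (α s 0)] at h
    exact (add_left_cancel h).symm
  have hαneg : ∀ (s : S) (t : T), α s (-t) = -α s t := by
    intro s t
    have h := hαadd s t (-t)
    rw [add_neg_cancel, hα0] at h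
    have h' : α s t + α s (-t) = 0 := h.symm
    exact eq_neg_of_add_eq_zero_right h'
  have hbt0 : ∀ t : T, b t 0 = 0 := by
    intro t
    have h := hbcoc t 0 0
    rw [add_zero, add_zero, hb0, add_zero] at h
    exact add_eq_left.mp h
  have hs0 : ∃ s : S, s ≠ 0 := by
    obtain ⟨a, c, hac⟩ := hSnontriv
    by_contra h
    push_neg at h
    apply hac
    rw [h a, h c, hmul0, add_zero]
  constructor
  · -- simplicity implies the closure is everything
    rintro ⟨-, hsimp⟩
    set I := AddSubgroup.closure {w : T | ∃ (s : S) (t : T), w = α s t - t} with hIdef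
    have hgen : ∀ (s : S) (t : T), α s t - t ∈ I := fun s t =>
      AddSubgroup.subset_closure ⟨s, t, rfl⟩
    have hαI : ∀ (s : S) (t : T), t ∈ I → α s t ∈ I := by
      intro s t ht
      have h : α s t = (α s t - t) + t := by abel
      rw [h]
      exact add_mem (hgen s t) ht
    have hIdeal : IsIdealAsym b α {x : T × S | x.1 ∈ I} := by
      refine ⟨zero_mem I, ?_, ?_, ?_, ?_⟩
      · intro x hx y hy
        show x.1 + α x.2 y.1 ∈ I
        exact add_mem hx (hαI _ _ hy)
      · intro x hx
        show α x.2⁻¹ (-x.1) ∈ I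
        exact hαI _ _ (neg_mem hx)
      · intro g x hx
        show (g.1 + α g.2 x.1) + α (g.2 * x.2) (α g.2⁻¹ (-g.1)) ∈ I
        have h1 : α (g.2 * x.2) (α g.2⁻¹ (-g.1)) = α (g.2 * x.2 * g.2⁻¹) (-g.1) := by
          rw [hαhom (g.2 * x.2) g.2⁻¹]
          rfl
        rw [h1]
        have h2 : (g.1 + α g.2 x.1) + α (g.2 * x.2 * g.2⁻¹) (-g.1)
            = α g.2 x.1 + (α (g.2 * x.2 * g.2⁻¹) (-g.1) - (-g.1)) := by abel
        rw [h2]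
        exact add_mem (hαI _ _ hx) (hgen _ _)
      · intro a x hx
        show (a.1 + α a.2 x.1) + -a.1 ∈ I
        have h2 : (a.1 + α a.2 x.1) + -a.1 = α a.2 x.1 := by abel
        rw [h2]
        exact hαI _ _ hx
    rcases hsimp _ hIdeal with h | h
    · exfalso
      obtain ⟨s₀, hs₀⟩ := hs0
      have hmem : (((0:T), s₀) : T × S) ∈ {x : T × S | x.1 ∈ I} := zero_mem I
      rw [h] at hmem
      exact hs₀ (Prod.ext_iff.mp (Set.mem_singleton_iff.mp hmem)).2
    · rw [AddSubgroup.eq_top_iff']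
      intro t
      have hmem : ((t, (0:S)) : T × S) ∈ {x : T × S | x.1 ∈ I} := by
        rw [h]; trivial
      exact hmem
  · -- the closure condition implies simplicity
    intro htop
    obtain ⟨s₀, hs₀⟩ := hs0
    refine ⟨⟨((0:T), s₀), fun hcon => hs₀ (Prod.ext_iff.mp hcon).2⟩, ?_⟩
    intro N hN
    obtain ⟨h01, hmulN, hinvN, hconjN, hlamN⟩ := hN
    have hJideal : IsIdealOfBrace {s : S | ((0:T), s) ∈ N} := by
      refine ⟨h01, ?_, ?_, ?_, ?_⟩
      · intro x hx y hy
        show ((0:T), x * y) ∈ N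
        have he : aMul α ((0:T), x) ((0:T), y) = ((0:T), x * y) := by
          simp [aMul, hα0]
        exact he ▸ hmulN _ hx _ hy
      · intro x hx
        show ((0:T), x⁻¹) ∈ N
        have he : aInv α ((0:T), x) = ((0:T), x⁻¹) := by
          simp [aInv, hα0]
        exact he ▸ hinvN _ hx
      · intro g x hx
        show ((0:T), g * x * g⁻¹) ∈ N
        have he : aMul α (aMul α ((0:T), g) ((0:T), x)) (aInv α ((0:T), g))
            = ((0:T), g * x * g⁻¹) := by
          simp [aMul, aInv, hα0]
        exact he ▸ hconjN ((0:T), g) _ hx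
      · intro g x hx
        show ((0:T), g * x - g) ∈ N
        have he : aAdd b (aMul α ((0:T), g) ((0:T), x)) (aNeg b ((0:T), g))
            = ((0:T), g * x - g) := by
          simp [aAdd, aMul, aNeg, hα0, hb0, sub_eq_add_neg]
        exact he ▸ hlamN ((0:T), g) _ hx
    -- evaluation of the lambda map of (u,1)
    have hlam_eval : ∀ (u t : T) (s : S),
        aAdd b (aMul α (u, (1:S)) (t, s)) (aNeg b (u, (1:S)))
          = (t, s + (b (u + t) (-u) - b u (-u))) := by
      intro u t s
      have h1 : α (1:S) t = t := by rw [hαone]; rfl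
      simp only [aAdd, aMul, aNeg, h1, one_mul, Prod.mk.injEq]
      constructor
      · abel
      · rw [h10]
        abel
    rcases hSsimple _ hJideal with hJ | hJ
    · -- J = {0}: N must be trivial
      left
      ext ⟨t, s⟩
      simp only [Set.mem_singleton_iff, Prod.mk.injEq]
      constructor
      · intro hx
        by_cases ht : t = 0
        · subst ht
          refine ⟨rfl, ?_⟩
          have hmem : s ∈ {s : S | ((0:T), s) ∈ N} := hx
          rw [hJ] at hmem
          exact hmem
        · exfalso
          have key : ∀ u : T, b t u = 0 := by
            intro u
            have hy := hlamN (u, (1:S)) _ hx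
            rw [hlam_eval u t s] at hy
            have hxi := hinvN _ hx
            have hz := hmulN _ hxi _ hy
            have hez : aMul α (aInv α (t, s)) (t, s + (b (u + t) (-u) - b u (-u)))
                = ((0:T), s⁻¹ * (s + (b (u + t) (-u) - b u (-u)))) := by
              have hfst : α s⁻¹ (-t) + α s⁻¹ t = 0 := by
                rw [← hαadd, neg_add_cancel, hα0]
              simp [aInv, aMul, hfst]
            rw [hez] at hz
            have hmem : s⁻¹ * (s + (b (u + t) (-u) - b u (-u)))
                ∈ {s : S | ((0:T), s) ∈ N} := hz
            rw [hJ] at hmem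
            have h0 : s⁻¹ * (s + (b (u + t) (-u) - b u (-u))) = 0 :=
              Set.mem_singleton_iff.mp hmem
            have h1 : s + (b (u + t) (-u) - b u (-u)) = s := by
              have h2 := congrArg (fun y => s * y) h0
              simpa [mul_inv_cancel_left, hmul0] using h2
            have hD : b (u + t) (-u) = b u (-u) := by
              have h3 : b (u + t) (-u) - b u (-u) = 0 := by
                have := add_eq_left.mp h1
                exact this
              exact sub_eq_zero.mp h3
            have hc := hbcoc t u (-u)
            rw [add_neg_cancel, hbt0, zero_add, add_comm t u, hD] at hc
            exact add_eq_left.mp hc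
          obtain ⟨t', hbt'⟩ := hnd t ht
          exact hbt' (key t')
      · rintro ⟨rfl, rfl⟩
        have := h01
        rwa [h10] at this
    · -- J = S : N is everything
      right
      have hall : ∀ s : S, ((0:T), s) ∈ N := by
        intro s
        have hmem : s ∈ {s : S | ((0:T), s) ∈ N} := by rw [hJ]; trivial
        exact hmem
      have hP1 : ∀ (t : T) (s : S), ((t, s) : T × S) ∈ N → ((t, (1:S)) : T × S) ∈ N := by
        intro t s hx
        have h := hmulN _ hx _ (hall s⁻¹)
        have he : aMul α (t, s) ((0:T), s⁻¹) = (t, (1:S)) := by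
          simp [aMul, hα0]
        rwa [he] at h
      have hconjel : ∀ (u : T) (s : S), ((u + α s (-u), s) : T × S) ∈ N := by
        intro u s
        have h := hconjN (u, (1:S)) _ (hall s)
        have he : aMul α (aMul α (u, (1:S)) ((0:T), s)) (aInv α (u, (1:S)))
            = (u + α s (-u), s) := by
          simp [aMul, aInv, hαone, hα0]
        rwa [he] at h
      have hPtop : ∀ t : T, ((t, (1:S)) : T × S) ∈ N := by
        intro t
        have hmem : t ∈ AddSubgroup.closure {w : T | ∃ (s : S) (t : T), w = α s t - t} := by
          rw [htop]; trivial
        refine AddSubgroup.closure_induction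
          (p := fun t _ => ((t, (1:S)) : T × S) ∈ N) ?_ ?_ ?_ ?_ hmem
        · rintro w ⟨s, v, rfl⟩
          have h1 : ((v + α s (-v), (1:S)) : T × S) ∈ N := hP1 _ _ (hconjel v s)
          have h2 := hinvN _ h1
          have he : aInv α ((v + α s (-v), (1:S)) : T × S) = (α s v - v, (1:S)) := by
            simp [aInv, hαone, hαneg]
            abel
          rwa [he] at h2
        · exact h01
        · intro x y _ _ hx hy
          have h := hmulN _ hx _ hy
          have he : aMul α (x, (1:S)) (y, (1:S)) = (x + y, (1:S)) := by
            simp [aMul, hαone]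
          rwa [he] at h
        · intro x _ hx
          have h := hinvN _ hx
          have he : aInv α (x, (1:S)) = (-x, (1:S)) := by
            simp [aInv, hαone]
          rwa [he] at h
      ext ⟨t, s⟩
      simp only [Set.mem_univ, iff_true]
      have h := hmulN _ (hPtop t) _ (hall s)
      have he : aMul α (t, (1:S)) ((0:T), s) = (t, s) := by
        simp [aMul, hαone]
      rwa [he] at h
end

section
/- Let G₁ and G₂ be two left braces and let α₁ be a brace automorphism of G₁. Let H₂ = { f : G₁ → G₂ : f(g) ≠ 1 for only finitely many g ∈ G₁ }, and let α̂₁ : H₂ → H₂ be defined by α̂₁(f)(g) = f(α₁⁻¹(g)). Then the map α₂ : G₂≀G₁ → G₂≀G₁ defined by α₂(f,g) = (α̂₁(f), α₁(g)) is an automorphism of the left brace G₂≀G₁ (it preserves both + and ·). -/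
/-- an automorphism `α₁` of the left brace `G₁` induces an automorphism
`α₂(f,g) = (f∘α₁⁻¹, α₁(g))` of the wreath product `G₂≀G₁`, whose underlying set is
`W = H₂ × G₁` with `H₂` the finitely supported functions `G₁ → G₂`. -/
theorem wreath_induced_automorphism
    {G₁ G₂ : Type*} [AddCommGroup G₁] [Group G₁] [AddCommGroup G₂] [Group G₂]
    (h₁ : ∀ a b c : G₁, a * (b + c) + a = a * b + a * c)
    (h₂ : ∀ a b c : G₂, a * (b + c) + a = a * b + a * c)
    (α₁ : G₁ ≃ G₁)
    (hadd : ∀ x y : G₁, α₁ (x + y) = α₁ x + α₁ y)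
    (hmul : ∀ x y : G₁, α₁ (x * y) = α₁ x * α₁ y) :
    let W : Set ((G₁ → G₂) × G₁) := {p | {g : G₁ | p.1 g ≠ 1}.Finite}
    let add : ((G₁ → G₂) × G₁) → ((G₁ → G₂) × G₁) → ((G₁ → G₂) × G₁) :=
      fun p q => (fun x => p.1 x + q.1 x, p.2 + q.2)
    let mul : ((G₁ → G₂) × G₁) → ((G₁ → G₂) × G₁) → ((G₁ → G₂) × G₁) :=
      fun p q => (fun x => p.1 x * q.1 (p.2⁻¹ * x), p.2 * q.2)
    let Φ : ((G₁ → G₂) × G₁) → ((G₁ → G₂) × G₁) :=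
      fun p => (fun x => p.1 (α₁.symm x), α₁ p.2)
    Set.BijOn Φ W W ∧
    (∀ p ∈ W, ∀ q ∈ W, Φ (add p q) = add (Φ p) (Φ q)) ∧
    (∀ p ∈ W, ∀ q ∈ W, Φ (mul p q) = mul (Φ p) (Φ q)) := by
  intro W add mul Φ
  have hone : α₁ 1 = 1 := by
    have := hmul 1 1
    rw [one_mul] at this
    have h' : α₁ 1 * α₁ 1 = 1 * α₁ 1 := by rw [one_mul, ← this]
    exact mul_right_cancel h'
  have hinv : ∀ x : G₁, α₁ x⁻¹ = (α₁ x)⁻¹ := by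
    intro x
    have := hmul x⁻¹ x
    rw [inv_mul_cancel, hone] at this
    exact eq_inv_of_mul_eq_one_left this.symm
  have hmaps : ∀ p ∈ W, Φ p ∈ W := by
    intro p hp
    have : {g : G₁ | (Φ p).1 g ≠ 1} ⊆ α₁ '' {g : G₁ | p.1 g ≠ 1} := by
      intro g hg
      exact ⟨α₁.symm g, hg, α₁.apply_symm_apply g⟩
    exact Set.Finite.subset (hp.image α₁) this
  refine ⟨⟨hmaps, ?_, ?_⟩, ?_, ?_⟩
  · intro p _ q _ h
    have h1 := congrArg Prod.fst h
    have h2 := congrArg Prod.snd h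
    simp only [Φ] at h1 h2
    ext x
    · have := congrFun h1 (α₁ x)
      simpa using this
    · exact α₁.injective h2
  · intro p hp
    refine ⟨(fun x => p.1 (α₁ x), α₁.symm p.2), ?_, ?_⟩
    · have : {g : G₁ | p.1 (α₁ g) ≠ 1} ⊆ α₁.symm '' {g : G₁ | p.1 g ≠ 1} := by
        intro g hg
        exact ⟨α₁ g, hg, α₁.symm_apply_apply g⟩
      exact Set.Finite.subset (hp.image α₁.symm) this
    · simp only [Φ]
      ext x
      · simp
      · simp
  · intro p _ q _
    simp only [Φ, add, hadd]
  · intro p _ q _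
    simp only [Φ, mul, Prod.mk.injEq]
    refine ⟨?_, hmul p.2 q.2⟩
    funext x
    have harg : p.2⁻¹ * α₁.symm x = α₁.symm ((α₁ p.2)⁻¹ * x) := by
      apply α₁.injective
      rw [hmul, α₁.apply_symm_apply, α₁.apply_symm_apply, hinv]
    rw [harg]
end

section
/- Let G be a finite group and K a field of prime characteristic p with p not dividing the order of G. Let E₀ = K[G] ⋊ G be the semidirect product of the additive group of the group algebra K[G] with G, where G acts on (K[G],+) by left multiplication; i.e., E₀ = K[G] × G with multiplication (a,g)(b,h) = (a + g·b, gh). Let D₀ = G and D_m = [D_{m−1}, D_{m−1}] for m ≥ 1, and let E_m = [E_{m−1}, E_{m−1}] for m ≥ 1. Then for every m ≥ 1, E_m = { (a, g) : a ∈ ω(K[D_{m−1}])K[G], g ∈ D_m }, where ω(K[D_{m−1}])K[G] denotes the K-linear span of all elements (d − 1)·g with d ∈ D_{m−1} and g ∈ G. -/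
open MonoidAlgebra

/-- The semidirect product `K[G] ⋊ G` of the additive group of the group algebra
`K[G]` with `G`, where `G` acts on `(K[G],+)` by left multiplication. -/
structure GroupAlgebraSDP (K G : Type*) [Field K] [Group G] where
  /-- the group algebra component -/
  fst : MonoidAlgebra K G
  /-- the group component -/
  snd : G

namespace GroupAlgebraSDP

variable {K G : Type*} [Field K] [Group G]

noncomputable instance : Mul (GroupAlgebraSDP K G) :=
  ⟨fun x y => ⟨x.fst + single x.snd (1 : K) * y.fst, x.snd * y.snd⟩⟩

noncomputable instance : One (GroupAlgebraSDP K G) := ⟨⟨0, 1⟩⟩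

noncomputable instance : Inv (GroupAlgebraSDP K G) :=
  ⟨fun x => ⟨-(single x.snd⁻¹ (1 : K) * x.fst), x.snd⁻¹⟩⟩

theorem mul_def (x y : GroupAlgebraSDP K G) :
    x * y = ⟨x.fst + single x.snd (1 : K) * y.fst, x.snd * y.snd⟩ := rfl

theorem one_def : (1 : GroupAlgebraSDP K G) = ⟨0, 1⟩ := rfl

theorem inv_def (x : GroupAlgebraSDP K G) :
    x⁻¹ = ⟨-(single x.snd⁻¹ (1 : K) * x.fst), x.snd⁻¹⟩ := rfl

noncomputable instance : Group (GroupAlgebraSDP K G) where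
  mul_assoc x y z := by
    cases x; cases y; cases z
    simp only [mul_def, GroupAlgebraSDP.mk.injEq]
    constructor
    · rw [mul_add, ← mul_assoc, single_mul_single, one_mul, add_assoc]
    · rw [mul_assoc]
  one_mul x := by
    cases x
    simp only [mul_def, one_def, zero_add]
    rw [← MonoidAlgebra.one_def, one_mul, one_mul]
  mul_one x := by
    cases x
    simp [mul_def, one_def]
  inv_mul_cancel x := by
    cases x
    simp [mul_def, inv_def, one_def]

end GroupAlgebraSDP

/-!
Write `E = K[G] ⋊ G`, `D n` for the derived series of `G`, and `S(N, H)` for the subgroup of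
pairs `(a, g)` with `a ∈ ω(K[N]) K[G]` and `g ∈ H` (`N` normal). Expanding a commutator shows
that `⁅x, y⁆` has first component in `ω(K[N]) K[G]` as soon as `x.snd, y.snd ∈ N`, whence
`E (n + 1) ≤ S(D n, D (n + 1))`. Conversely `⁅(b, 1), (0, d)⁆ = ((1 - d) b, 1)`, and when `|H|`
is invertible in `K`, averaging over `H` writes every `(d - 1) b` with `d ∈ H` as `(1 - d) c`
with `c ∈ ω(K[H]) K[G]`. Hence `S(H, H) ≤ F` implies `S(H, ⁅H, H⁆) ≤ ⁅F, F⁆`; by induction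
`S(D n, D n) ≤ E n`, which gives the reverse inclusion.
-/

open scoped commutatorElement

theorem Subgroup.natCast_card_ne_zero {G R : Type*} [Group G] [Semiring R] (H : Subgroup G)
    (hG : (Nat.card G : R) ≠ 0) : (Nat.card H : R) ≠ 0 := fun hH =>
  hG (by rw [← H.card_mul_index, Nat.cast_mul, hH, zero_mul])

namespace MonoidAlgebra

variable {K G : Type*} [Group G]

section CommRing

variable [CommRing K] {N M : Subgroup G}

variable (K) in
/-- `ω(K[N]) K[G]`. -/
noncomputable def augmentationSpan (N : Subgroup G) : Submodule K (MonoidAlgebra K G) :=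
  Submodule.span K
    {w : MonoidAlgebra K G | ∃ d ∈ N, ∃ g : G, w = (single d (1 : K) - 1) * single g (1 : K)}

theorem sub_one_mul_mem_augmentationSpan {d : G} (hd : d ∈ N) (b : MonoidAlgebra K G) :
    (single d (1 : K) - 1) * b ∈ augmentationSpan K N := by
  induction b using MonoidAlgebra.induction_linear with
  | zero => simp
  | add f g hf hg => rw [mul_add]; exact add_mem hf hg
  | single g c =>
    have hc : single g c = c • single g (1 : K) := by rw [smul_single', mul_one]
    rw [hc, mul_smul_comm]
    exact Submodule.smul_mem _ _ (Submodule.subset_span ⟨d, hd, g, rfl⟩)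

theorem augmentationSpan_mono (h : N ≤ M) : augmentationSpan K N ≤ augmentationSpan K M :=
  Submodule.span_mono fun _ ⟨d, hd, g, hw⟩ => ⟨d, h hd, g, hw⟩

theorem single_mul_mem_augmentationSpan [N.Normal] (g : G) {a : MonoidAlgebra K G}
    (ha : a ∈ augmentationSpan K N) : single g (1 : K) * a ∈ augmentationSpan K N := by
  induction ha using Submodule.span_induction with
  | mem w hw =>
    obtain ⟨d, hd, g', rfl⟩ := hw
    have hconj : single g (1 : K) * ((single d 1 - 1) * single g' 1)
        = (single (g * d * g⁻¹) 1 - 1) * single (g * g') 1 := by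
      simp [mul_sub, sub_mul, single_mul_single, mul_assoc]
    rw [hconj]
    exact sub_one_mul_mem_augmentationSpan (‹N.Normal›.conj_mem d hd g) _
  | zero => simp
  | add x y _ _ hx hy => rw [mul_add]; exact add_mem hx hy
  | smul c x _ hx => rw [mul_smul_comm]; exact Submodule.smul_mem _ c hx

end CommRing

theorem single_one_mul_sum_subgroup [Semiring K] {H : Subgroup G} [Fintype H] {d : G}
    (hd : d ∈ H) :
    single d (1 : K) * ∑ e : H, single (e : G) (1 : K) = ∑ e : H, single (e : G) (1 : K) := by
  simp only [Finset.mul_sum, single_mul_single, one_mul]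
  exact Fintype.sum_equiv (Equiv.mulLeft ⟨d, hd⟩) _ _ fun _ => rfl

theorem exists_mem_augmentationSpan_one_sub_single_mul_eq [Field K] (H : Subgroup G)
    [Fintype H] (hH : (Fintype.card H : K) ≠ 0) {d : G} (hd : d ∈ H) (b : MonoidAlgebra K G) :
    ∃ c ∈ augmentationSpan K H, (1 - single d (1 : K)) * c = (single d (1 : K) - 1) * b := by
  refine ⟨(Fintype.card H : K)⁻¹ • ∑ e : H, (single (e : G) (1 : K) - 1) * b,
    Submodule.smul_mem _ _ (Submodule.sum_mem _ fun e _ =>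
      sub_one_mul_mem_augmentationSpan e.2 b), ?_⟩
  have hsum : ∑ e : H, (single (e : G) (1 : K) - 1) * b
      = (∑ e : H, single (e : G) (1 : K)) * b - (Fintype.card H : K) • b := by
    simp [Finset.sum_mul, sub_mul, Finset.sum_sub_distrib, Finset.card_univ,
      Nat.cast_smul_eq_nsmul]
  rw [hsum, mul_smul_comm, mul_sub, ← mul_assoc, sub_mul (1 : MonoidAlgebra K G), one_mul,
    single_one_mul_sum_subgroup hd, sub_self, zero_mul, zero_sub, mul_smul_comm, smul_neg,
    smul_smul, inv_mul_cancel₀ hH, one_smul]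
  noncomm_ring

end MonoidAlgebra

namespace GroupAlgebraSDP

variable {K G : Type*} [Field K] [Group G]

@[ext]
theorem ext {x y : GroupAlgebraSDP K G} (hfst : x.fst = y.fst) (hsnd : x.snd = y.snd) :
    x = y := by
  cases x; cases y; congr

def rightHom : GroupAlgebraSDP K G →* G where
  toFun := snd
  map_one' := rfl
  map_mul' _ _ := rfl

noncomputable def inr : G →* GroupAlgebraSDP K G where
  toFun g := ⟨0, g⟩
  map_one' := rfl
  map_mul' _ _ := by ext <;> simp [mul_def]

theorem mk_eq_mk_one_mul_inr (a : MonoidAlgebra K G) (g : G) :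
    (⟨a, g⟩ : GroupAlgebraSDP K G) = ⟨a, 1⟩ * inr g := by
  ext <;> simp [mul_def, inr]

theorem mk_add_one_eq_mul (a b : MonoidAlgebra K G) :
    (⟨a + b, 1⟩ : GroupAlgebraSDP K G) = ⟨a, 1⟩ * ⟨b, 1⟩ := by
  ext <;> simp [mul_def, ← MonoidAlgebra.one_def]

theorem commutatorElement_snd (x y : GroupAlgebraSDP K G) : ⁅x, y⁆.snd = ⁅x.snd, y.snd⁆ :=
  rfl

theorem commutatorElement_fst (x y : GroupAlgebraSDP K G) :
    ⁅x, y⁆.fst = (single x.snd (1 : K) - 1) * y.fst - (single y.snd (1 : K) - 1) * x.fst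
      - (single ⁅x.snd, y.snd⁆ (1 : K) - 1) * (y.fst + single y.snd (1 : K) * x.fst) := by
  obtain ⟨a, g⟩ := x
  obtain ⟨b, h⟩ := y
  simp only [commutatorElement_def, mul_def, inv_def]
  simp only [mul_neg, sub_mul, mul_add, ← mul_assoc, single_mul_single, one_mul,
    inv_mul_cancel_right]
  noncomm_ring

theorem commutatorElement_mk_one_inr (b : MonoidAlgebra K G) (d : G) :
    ⁅(⟨b, 1⟩ : GroupAlgebraSDP K G), inr d⁆ = ⟨(1 - single d (1 : K)) * b, 1⟩ := by
  ext : 1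
  · simp [commutatorElement_fst, inr, ← MonoidAlgebra.one_def]
    noncomm_ring
  · simp [commutatorElement_snd, inr]

noncomputable def augmentationSubgroup (N : Subgroup G) [N.Normal] (H : Subgroup G) :
    Subgroup (GroupAlgebraSDP K G) where
  carrier := {x | x.fst ∈ augmentationSpan K N ∧ x.snd ∈ H}
  mul_mem' hx hy := ⟨add_mem hx.1 (single_mul_mem_augmentationSpan _ hy.1), mul_mem hx.2 hy.2⟩
  one_mem' := ⟨zero_mem _, one_mem _⟩
  inv_mem' hx := ⟨neg_mem (single_mul_mem_augmentationSpan _ hx.1), inv_mem hx.2⟩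

theorem augmentationSubgroup_mono {N N' H H' : Subgroup G} [N.Normal] [N'.Normal] (hN : N ≤ N')
    (hH : H ≤ H') : augmentationSubgroup (K := K) N H ≤ augmentationSubgroup N' H' :=
  fun _ hx => ⟨augmentationSpan_mono hN hx.1, hH hx.2⟩

theorem mk_one_mem_of_smul_mem {F : Subgroup (GroupAlgebraSDP K G)}
    {s : Set (MonoidAlgebra K G)} (hs : ∀ c : K, ∀ w ∈ s, (⟨c • w, 1⟩ : GroupAlgebraSDP K G) ∈ F)
    {a : MonoidAlgebra K G}
    (ha : a ∈ Submodule.span K s) : (⟨a, 1⟩ : GroupAlgebraSDP K G) ∈ F := by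
  rw [← Submodule.mem_toAddSubmonoid, Submodule.span_eq_closure] at ha
  induction ha using AddSubmonoid.closure_induction with
  | mem _ hw =>
    obtain ⟨c, -, w, hw, rfl⟩ := hw
    exact hs c w hw
  | zero => exact one_mem F
  | add a b _ _ ha hb => rw [mk_add_one_eq_mul]; exact mul_mem ha hb

theorem commutator_le_augmentationSubgroup {N : Subgroup G} [N.Normal]
    {F : Subgroup (GroupAlgebraSDP K G)} (hF : F ≤ N.comap rightHom) :
    ⁅F, F⁆ ≤ augmentationSubgroup N ⁅N, N⁆ := by
  refine Subgroup.commutator_le.mpr fun x hx y hy => ?_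
  replace hx : x.snd ∈ N := hF hx
  replace hy : y.snd ∈ N := hF hy
  have hxy := Subgroup.commutator_mem_commutator hx hy
  refine ⟨?_, hxy⟩
  rw [commutatorElement_fst]
  exact sub_mem (sub_mem (sub_one_mul_mem_augmentationSpan hx _)
    (sub_one_mul_mem_augmentationSpan hy _))
    (sub_one_mul_mem_augmentationSpan (Subgroup.commutator_le_left N N hxy) _)

theorem augmentationSubgroup_le_commutator (H : Subgroup G) [H.Normal] [Finite H]
    (hH : (Nat.card H : K) ≠ 0) {F : Subgroup (GroupAlgebraSDP K G)}
    (hF : augmentationSubgroup H H ≤ F) : augmentationSubgroup H ⁅H, H⁆ ≤ ⁅F, F⁆ := by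
  have := Fintype.ofFinite H
  rw [Nat.card_eq_fintype_card] at hH
  have hinr : H.map inr ≤ F :=
    Subgroup.map_le_iff_le_comap.mpr fun d hd => hF ⟨zero_mem _, hd⟩
  rintro ⟨a, g⟩ ⟨ha, hg⟩
  rw [mk_eq_mk_one_mul_inr]
  refine mul_mem (mk_one_mem_of_smul_mem ?_ ha) ?_
  · rintro c _ ⟨d, hd, g', rfl⟩
    obtain ⟨b, hb, hbd⟩ :=
      exists_mem_augmentationSpan_one_sub_single_mul_eq H hH hd (single g' c)
    have hcw : c • ((single d (1 : K) - 1) * single g' 1) = (1 - single d (1 : K)) * b := by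
      rw [hbd, ← mul_smul_comm, smul_single', mul_one]
    rw [hcw, ← commutatorElement_mk_one_inr]
    exact Subgroup.commutator_mem_commutator (hF ⟨hb, one_mem H⟩) (hinr ⟨d, hd, rfl⟩)
  · have hg' : (inr g : GroupAlgebraSDP K G) ∈ (⁅H, H⁆).map inr := ⟨g, hg, rfl⟩
    rw [Subgroup.map_commutator] at hg'
    exact Subgroup.commutator_mono hinr hinr hg'

theorem augmentationSubgroup_derivedSeries_le [Finite G] (hG : (Nat.card G : K) ≠ 0)
    (n : ℕ) :
    augmentationSubgroup (derivedSeries G n) (derivedSeries G n)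
      ≤ derivedSeries (GroupAlgebraSDP K G) n := by
  induction n with
  | zero => simp only [derivedSeries_zero, le_top]
  | succ n ih =>
    calc augmentationSubgroup (derivedSeries G (n + 1)) (derivedSeries G (n + 1))
        ≤ augmentationSubgroup (derivedSeries G n) (derivedSeries G (n + 1)) :=
          augmentationSubgroup_mono (derivedSeries_antitone G n.le_succ) le_rfl
      _ ≤ derivedSeries (GroupAlgebraSDP K G) (n + 1) := by
          rw [derivedSeries_succ, derivedSeries_succ]
          exact augmentationSubgroup_le_commutator _ (Subgroup.natCast_card_ne_zero _ hG) ih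

theorem derivedSeries_succ_eq_augmentationSubgroup [Finite G] (hG : (Nat.card G : K) ≠ 0)
    (n : ℕ) :
    derivedSeries (GroupAlgebraSDP K G) (n + 1)
      = augmentationSubgroup (derivedSeries G n) (derivedSeries G (n + 1)) := by
  rw [derivedSeries_succ, derivedSeries_succ]
  refine le_antisymm ?_ (augmentationSubgroup_le_commutator _
    (Subgroup.natCast_card_ne_zero _ hG) (augmentationSubgroup_derivedSeries_le hG n))
  have hE : derivedSeries (GroupAlgebraSDP K G) n ≤ (derivedSeries G n).comap rightHom :=
    Subgroup.map_le_iff_le_comap.mp (map_derivedSeries_le_derivedSeries _ n)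
  exact commutator_le_augmentationSubgroup hE

end GroupAlgebraSDP

theorem derivedSeries_groupAlgebraSDP_general
    (K G : Type*) [Field K] [Group G] [Fintype G]
    (p : ℕ) [CharP K p] (hpG : ¬ p ∣ Fintype.card G)
    (m : ℕ) (hm : 1 ≤ m) :
    (derivedSeries (GroupAlgebraSDP K G) m : Set (GroupAlgebraSDP K G)) =
      {x : GroupAlgebraSDP K G |
        x.fst ∈ Submodule.span K
          {w : MonoidAlgebra K G | ∃ d ∈ derivedSeries G (m - 1), ∃ g : G,
            w = (MonoidAlgebra.single d (1 : K) - 1) * MonoidAlgebra.single g (1 : K)} ∧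
        x.snd ∈ derivedSeries G m} := by
  obtain ⟨n, rfl⟩ := Nat.exists_eq_add_of_le' hm
  have hG : (Nat.card G : K) ≠ 0 := by
    rwa [Nat.card_eq_fintype_card, Ne, CharP.cast_eq_zero_iff K p]
  exact congrArg SetLike.coe (GroupAlgebraSDP.derivedSeries_succ_eq_augmentationSubgroup hG n)

/-- let `G` be a finite group, `K` a field of prime characteristic `p`
not dividing `|G|`, and `E₀ = K[G] ⋊ G`.  With `D_m` the derived series of `G` and
`E_m` the derived series of `E₀`, for every `m ≥ 1` the subgroup `E_m` consists exactly
of the pairs `(a,g)` with `a ∈ ω(K[D_{m−1}])·K[G]` (the `K`-span of the elements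
`(d − 1)·g`, `d ∈ D_{m−1}`, `g ∈ G`) and `g ∈ D_m`. -/
theorem derivedSeries_groupAlgebraSDP
    (K G : Type*) [Field K] [Group G] [Fintype G]
    (p : ℕ) (hp : p.Prime) [CharP K p] (hpG : ¬ p ∣ Fintype.card G)
    (m : ℕ) (hm : 1 ≤ m) :
    (derivedSeries (GroupAlgebraSDP K G) m : Set (GroupAlgebraSDP K G)) =
      {x : GroupAlgebraSDP K G |
        x.fst ∈ Submodule.span K
          {w : MonoidAlgebra K G | ∃ d ∈ derivedSeries G (m - 1), ∃ g : G,
            w = (MonoidAlgebra.single d (1 : K) - 1) * MonoidAlgebra.single g (1 : K)} ∧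
        x.snd ∈ derivedSeries G m} :=
  derivedSeries_groupAlgebraSDP_general K G p hpG m hm
end

section
/- Let G be a finite solvable group of derived length d and let K be a field of prime characteristic p with p not dividing the order of G. Then the semidirect product E = K[G] ⋊ G of the additive group of the group algebra K[G] with G (where G acts by left multiplication, i.e., (a,g)(b,h) = (a + g·b, gh)) is a solvable group of derived length exactly d + 1. -/
/-!
Projecting `E = K[G] ⋊ G` onto `G` sends `E⁽ᵈ⁾` into `G⁽ᵈ⁾ = 1`, so `E⁽ᵈ⁾` lies in the abelian
normal subgroup `K[G]` and `E⁽ᵈ⁺¹⁾ = 1`. Conversely, by induction on `n`, `(h - 1) a ∈ E⁽ⁿ⁺¹⁾` for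
all `h ∈ G⁽ⁿ⁾` and `a ∈ K[G]`: for `h ∈ G⁽ⁿ⁺¹⁾ ≤ L := G⁽ⁿ⁾`, the idempotent `e = |L|⁻¹ ∑_{l ∈ L} l`
(defined since `p ∤ |L|`) is fixed by `h`, so `(h - 1) a = (h - 1) a'` with
`a' = a - e a = -|L|⁻¹ ∑_{l ∈ L} (l - 1) a ∈ E⁽ⁿ⁺¹⁾`, and `(h - 1) a'` is the commutator of a lift
of `h` with `a'`. Taking `h ≠ 1` in `G⁽ᵈ⁻¹⁾` gives `h - 1 ≠ 0` in `E⁽ᵈ⁾`.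
-/

open MonoidAlgebra

open scoped commutatorElement

namespace MonoidAlgebra

variable {k G : Type*} [Group G] {L : Subgroup G} [Fintype L]

theorem single_one_mul_sum_subgroup_s12 [Semiring k] {h : G} (hh : h ∈ L) (c : k) :
    single h 1 * ∑ l : L, single (l : G) c = ∑ l : L, single (l : G) c := by
  simp only [Finset.mul_sum, single_mul_single, one_mul]
  exact Fintype.sum_equiv (Equiv.mulLeft ⟨h, hh⟩) _ _ fun _ => rfl

theorem sub_sum_subgroup_mul [CommRing k] {c : k} (hc : (Fintype.card L : k) * c = 1)
    (a : MonoidAlgebra k G) :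
    a - (∑ l : L, single (l : G) c) * a = -∑ l : L, (single (l : G) 1 * (c • a) - c • a) := by
  have single_mul_smul (l : L) : single (l : G) 1 * (c • a) = single (l : G) c * a := by
    rw [mul_smul_comm, ← smul_mul_assoc, smul_single', mul_one]
  calc a - (∑ l : L, single (l : G) c) * a
      = (Fintype.card L : k) • c • a - ∑ l : L, single (l : G) c * a := by
        rw [smul_smul, hc, one_smul, Finset.sum_mul]
    _ = _ := by
        simp only [single_mul_smul, Finset.sum_sub_distrib, Finset.sum_const, Finset.card_univ,
          Nat.cast_smul_eq_nsmul, neg_sub]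

end MonoidAlgebra

namespace GroupAlgebraSDP

variable {K G : Type*} [Field K] [Group G]

def inl (a : MonoidAlgebra K G) : GroupAlgebraSDP K G := ⟨a, 1⟩

theorem inl_add (a b : MonoidAlgebra K G) : inl (a + b) = inl a * inl b := by
  rw [inl, inl, inl, mul_def, ← MonoidAlgebra.one_def, one_mul, mul_one]

theorem inl_neg (a : MonoidAlgebra K G) : inl (-a) = (inl a)⁻¹ := by
  rw [inl, inl, inv_def, inv_one, ← MonoidAlgebra.one_def, one_mul]

theorem inl_zero : inl (0 : MonoidAlgebra K G) = 1 := rfl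

theorem inl_eq_one {a : MonoidAlgebra K G} : inl a = 1 ↔ a = 0 := by
  simp [inl, one_def]

theorem eq_inl_of_snd_eq_one {x : GroupAlgebraSDP K G} (hx : x.snd = 1) : x = inl x.fst := by
  cases x
  simp_all [inl]

instance : Nontrivial (GroupAlgebraSDP K G) :=
  ⟨⟨inl 1, 1, inl_eq_one.not.mpr one_ne_zero⟩⟩

theorem commutator_mk_inl (b : MonoidAlgebra K G) (g : G) (a : MonoidAlgebra K G) :
    ⁅(⟨b, g⟩ : GroupAlgebraSDP K G), inl a⁆ = inl (single g 1 * a - a) := by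
  simp only [inl, commutatorElement_def, mul_def, inv_def, mk.injEq, mul_one, inv_one,
    mul_inv_cancel, and_true]
  rw [← MonoidAlgebra.one_def]
  simp only [one_mul, mul_neg, ← mul_assoc, single_mul_single, mul_one, mul_inv_cancel,
    ← MonoidAlgebra.one_def]
  abel

theorem commutator_inl_inl (a b : MonoidAlgebra K G) : ⁅inl a, inl b⁆ = 1 := by
  rw [inl, commutator_mk_inl, ← MonoidAlgebra.one_def, one_mul, sub_self, inl_zero]

def sndHom : GroupAlgebraSDP K G →* G where
  toFun x := x.snd
  map_one' := rfl
  map_mul' _ _ := rfl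

theorem sndHom_surjective : Function.Surjective (sndHom : GroupAlgebraSDP K G →* G) :=
  fun g => ⟨⟨0, g⟩, rfl⟩

theorem derivedSeries_succ_eq_bot {d : ℕ} (hd : derivedSeries G d = ⊥) :
    derivedSeries (GroupAlgebraSDP K G) (d + 1) = ⊥ := by
  have snd_eq_one {x} (hx : x ∈ derivedSeries (GroupAlgebraSDP K G) d) : x.snd = 1 :=
    Subgroup.mem_bot.mp (hd ▸ map_derivedSeries_le_derivedSeries sndHom d ⟨x, hx, rfl⟩)
  rw [derivedSeries_succ, eq_bot_iff, Subgroup.commutator_le]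
  intro x hx y hy
  rw [eq_inl_of_snd_eq_one (snd_eq_one hx), eq_inl_of_snd_eq_one (snd_eq_one hy),
    commutator_inl_inl]
  exact Subgroup.one_mem _

def fiber (S : Subgroup (GroupAlgebraSDP K G)) : AddSubgroup (MonoidAlgebra K G) where
  carrier := {a | inl a ∈ S}
  zero_mem' := S.one_mem
  add_mem' ha hb := by simpa [inl_add] using S.mul_mem ha hb
  neg_mem' ha := by simpa [inl_neg] using S.inv_mem ha

theorem inl_single_mul_sub_mem_derivedSeries [Finite G] (hG : (Nat.card G : K) ≠ 0) (n : ℕ)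
    {h : G} (hh : h ∈ derivedSeries G n) (a : MonoidAlgebra K G) :
    inl (single h 1 * a - a) ∈ derivedSeries (GroupAlgebraSDP K G) (n + 1) := by
  induction n generalizing h a with
  | zero =>
    rw [← commutator_mk_inl 0, derivedSeries_succ]
    exact Subgroup.commutator_mem_commutator (Subgroup.mem_top _) (Subgroup.mem_top _)
  | succ n ih =>
    set L := derivedSeries G n
    have : Fintype L := Fintype.ofFinite L
    set c : K := (Fintype.card L : K)⁻¹
    have hc : (Fintype.card L : K) * c = 1 :=
      mul_inv_cancel₀ (Nat.card_eq_fintype_card (α := L) ▸ L.natCast_card_ne_zero hG)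
    set e := ∑ l : L, single (l : G) c with he
    have ha' : a - e * a ∈ fiber (derivedSeries (GroupAlgebraSDP K G) (n + 1)) := by
      rw [he, sub_sum_subgroup_mul hc]
      exact neg_mem (sum_mem fun l _ => ih l.2 (c • a))
    have same_commutator : single h 1 * (a - e * a) - (a - e * a) = single h 1 * a - a := by
      rw [mul_sub, ← mul_assoc, he,
        single_one_mul_sum_subgroup_s12 (derivedSeries_antitone G n.le_succ hh)]
      abel
    obtain ⟨⟨b, g⟩, hx, hg⟩ :=
      derivedSeries_le_map_derivedSeries (sndHom_surjective (K := K)) (n + 1) hh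
    obtain rfl : g = h := hg
    rw [← same_commutator, ← commutator_mk_inl, derivedSeries_succ]
    exact Subgroup.commutator_mem_commutator hx ha'

theorem derivedSeries_succ_ne_bot [Finite G] (hG : (Nat.card G : K) ≠ 0) {n : ℕ}
    (hn : derivedSeries G n ≠ ⊥) : derivedSeries (GroupAlgebraSDP K G) (n + 1) ≠ ⊥ := by
  obtain ⟨⟨h, hh⟩, h_ne⟩ := Subgroup.ne_bot_iff_exists_ne_one.mp hn
  refine Subgroup.ne_bot_iff_exists_ne_one.mpr
    ⟨⟨_, inl_single_mul_sub_mem_derivedSeries hG n hh 1⟩, ?_⟩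
  rw [Ne, Subgroup.mk_eq_one, inl_eq_one, mul_one, sub_eq_zero, MonoidAlgebra.one_def,
    single_left_inj one_ne_zero]
  simpa using h_ne

end GroupAlgebraSDP

theorem derivedLength_groupAlgebraSDP_general
    (K G : Type*) [Field K] [Group G] [Fintype G]
    (p : ℕ) [CharP K p] (hpG : ¬ p ∣ Fintype.card G)
    (d : ℕ) (hd : derivedSeries G d = ⊥) (hdmin : ∀ m < d, derivedSeries G m ≠ ⊥) :
    derivedSeries (GroupAlgebraSDP K G) (d + 1) = ⊥ ∧
      ∀ m < d + 1, derivedSeries (GroupAlgebraSDP K G) m ≠ ⊥ := by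
  have hG : (Nat.card G : K) ≠ 0 := by
    rwa [Nat.card_eq_fintype_card, Ne, CharP.cast_eq_zero_iff K p]
  refine ⟨GroupAlgebraSDP.derivedSeries_succ_eq_bot hd, ?_⟩
  rintro (_ | m) hm
  · rw [derivedSeries_zero]
    exact top_ne_bot
  · exact GroupAlgebraSDP.derivedSeries_succ_ne_bot hG (hdmin m (by omega))

/-- if `G` is a finite solvable group of derived length `d` and `K` is a
field of prime characteristic `p` not dividing `|G|`, then `E = K[G] ⋊ G` is a solvable
group of derived length exactly `d + 1`. -/
theorem derivedLength_groupAlgebraSDP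
    (K G : Type*) [Field K] [Group G] [Fintype G]
    (p : ℕ) (hp : p.Prime) [CharP K p] (hpG : ¬ p ∣ Fintype.card G)
    (d : ℕ) (hd : derivedSeries G d = ⊥) (hdmin : ∀ m < d, derivedSeries G m ≠ ⊥) :
    derivedSeries (GroupAlgebraSDP K G) (d + 1) = ⊥ ∧
      ∀ m < d + 1, derivedSeries (GroupAlgebraSDP K G) m ≠ ⊥ :=
  derivedLength_groupAlgebraSDP_general K G p hpG d hd hdmin
end

section
/- With notation as in the context, the map α : (Z/(p),+) → Aut(T,+,·) defined by α(μ) = α_μ, where α_μ(u₁,…,u_s,a₁,…,a_s) = (f₁^μ(u₁),…,f_s^μ(u_s), γ₁^μ·a₁,…, γ_s^μ·a_s), is a well-defined homomorphism of groups; in particular each α_μ is an automorphism of the left brace T. -/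
/-!
Since `f_i` and `γ_i` have order `p`, the exponents `μ.val` may be added modulo `p`, which makes
`μ ↦ α_μ` a homomorphism; then `α_{-μ}` inverts `α_μ`. Additivity of `α_μ` is clear componentwise.
For the multiplication, iterating `f c = c^γ f` gives `f^μ c^a = c^(γ^μ a) f^μ`, and since `c_i` has
order `l_i` its exponent `γ^μ a` may be read in `Z/(l_i)`, which is exactly the second coordinate
of `α_μ`.
-/

/-- `(Z/(p))^n`. -/
abbrev BraceVec (p n : ℕ) := Fin n → ZMod p

/-- The underlying set of the semidirect product `T = (Z/(p))^n ⋊ A`, where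
`n = n₁ + ⋯ + n_s`, `(Z/(p))^n = ∏ i, (Z/(p))^{n_i}` and `A = ∏ i, Z/(l i)`. -/
abbrev BraceT (p s : ℕ) (l nn : Fin s → ℕ) : Type :=
  ((i : Fin s) → BraceVec p (nn i)) × ((i : Fin s) → ZMod (l i))

/-- Multiplication of the semidirect product `T = (Z/(p))^n ⋊ A` via the action
`β_{(a₁,…,a_s)}(u₁,…,u_s) = (c₁^{a₁}(u₁),…,c_s^{a_s}(u_s))`; its addition is the
componentwise one. -/
def braceTmul {p s : ℕ} {l nn : Fin s → ℕ}
    (c : ∀ i : Fin s, AddAut (BraceVec p (nn i)))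
    (x y : BraceT p s l nn) : BraceT p s l nn :=
  (fun i => x.1 i + ((x.2 i).val • c i) (y.1 i), x.2 + y.2)

/-- The map `α : Z/(p) → Maps(T,T)`,
`α_μ(u₁,…,u_s,a₁,…,a_s) = (f₁^μ(u₁),…,f_s^μ(u_s), γ₁^μ·a₁,…, γ_s^μ·a_s)`. -/
def braceAlpha {p s : ℕ} {l nn : Fin s → ℕ}
    (f : ∀ i : Fin s, AddAut (BraceVec p (nn i)))
    (γ : ∀ i : Fin s, (ZMod (l i))ˣ)
    (μ : ZMod p) (x : BraceT p s l nn) : BraceT p s l nn :=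
  (fun i => (μ.val • f i) (x.1 i), fun i => ((γ i : ZMod (l i)) ^ μ.val) * x.2 i)

@[to_additive]
theorem SemiconjBy.pow_pow_of_pow {G : Type*} [Monoid G] {f c : G} {g : ℕ}
    (h : SemiconjBy f c (c ^ g)) (m a : ℕ) : SemiconjBy (f ^ m) (c ^ a) (c ^ (g ^ m * a)) := by
  induction m generalizing a with
  | zero => simp
  | succ m ih =>
    have hf : SemiconjBy f (c ^ a) (c ^ (g * a)) := by simpa [pow_mul] using h.pow_right a
    rw [pow_succ, show g ^ (m + 1) * a = g ^ m * (g * a) by ring]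
    exact (ih (g * a)).mul_left hf

@[to_additive]
theorem pow_val_eq_pow_of_natCast_eq {G : Type*} [Monoid G] {n : ℕ} {g : G}
    (hg : orderOf g = n) {k : ℕ} {a : ZMod n} (h : (k : ZMod n) = a) : g ^ a.val = g ^ k := by
  rw [← h, ZMod.val_natCast, ← hg, pow_mod_orderOf]

@[to_additive]
theorem pow_val_add_of_orderOf_eq {G : Type*} [Monoid G] {n : ℕ} [NeZero n] {g : G}
    (hg : orderOf g = n) (a b : ZMod n) : g ^ (a + b).val = g ^ a.val * g ^ b.val := by
  rw [pow_val_eq_pow_of_natCast_eq hg (k := a.val + b.val) (by simp), pow_add]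

section braceAlpha

variable {p s : ℕ} {l nn : Fin s → ℕ}
  (c f : ∀ i : Fin s, AddAut (BraceVec p (nn i))) (γ : ∀ i : Fin s, (ZMod (l i))ˣ)

theorem braceAlpha_zero : braceAlpha (l := l) f γ (0 : ZMod p) = id := by
  ext x i <;> simp [braceAlpha]

theorem braceAlpha_add_eq_comp [NeZero p] (hfo : ∀ i, addOrderOf (f i) = p)
    (hγo : ∀ i, orderOf (γ i) = p) (μ ν : ZMod p) :
    braceAlpha (l := l) f γ (μ + ν) = braceAlpha f γ μ ∘ braceAlpha f γ ν := by
  have hγo' (i : Fin s) : orderOf (γ i : ZMod (l i)) = p := by rw [orderOf_units, hγo]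
  ext x i
  · simp [braceAlpha, nsmul_val_add_of_addOrderOf_eq (hfo i)]
  · simp [braceAlpha, pow_val_add_of_orderOf_eq (hγo' i), mul_assoc]

theorem braceAlpha_bijective [NeZero p] (hfo : ∀ i, addOrderOf (f i) = p)
    (hγo : ∀ i, orderOf (γ i) = p) (μ : ZMod p) :
    Function.Bijective (braceAlpha (l := l) f γ μ) := by
  have hcomp := braceAlpha_add_eq_comp f γ hfo hγo
  refine Function.bijective_iff_has_inverse.2 ⟨braceAlpha f γ (-μ), fun x => ?_, fun x => ?_⟩
  · simpa [braceAlpha_zero] using (congrFun (hcomp (-μ) μ) x).symm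
  · simpa [braceAlpha_zero] using (congrFun (hcomp μ (-μ)) x).symm

theorem braceAlpha_map_add (μ : ZMod p) (x y : BraceT p s l nn) :
    braceAlpha f γ μ (x + y) = braceAlpha f γ μ x + braceAlpha f γ μ y := by
  ext i <;> simp [braceAlpha, mul_add]

theorem braceAlpha_map_braceTmul [∀ i, NeZero (l i)] (hco : ∀ i, addOrderOf (c i) = l i)
    (hcomm : ∀ i, f i + c i = ((γ i : ZMod (l i)).val) • c i + f i)
    (μ : ZMod p) (x y : BraceT p s l nn) :
    braceAlpha f γ μ (braceTmul c x y) =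
      braceTmul c (braceAlpha f γ μ x) (braceAlpha f γ μ y) := by
  ext i : 2
  · set g := (γ i : ZMod (l i)).val
    have hconj := AddSemiconjBy.nsmul_nsmul_of_nsmul (hcomm i) μ.val (x.2 i).val
    have hc : ((γ i : ZMod (l i)) ^ μ.val * x.2 i).val • c i = (g ^ μ.val * (x.2 i).val) • c i :=
      nsmul_val_eq_nsmul_of_natCast_eq (hco i) (by simp [g])
    simpa [braceAlpha, braceTmul, hc] using congrArg (· (y.1 i)) hconj.eq
  · simp [braceAlpha, braceTmul, mul_add]

end braceAlpha

theorem braceAlpha_is_hom_general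
    (p s : ℕ) (l nn : Fin s → ℕ)
    (c f : ∀ i : Fin s, AddAut (BraceVec p (nn i)))
    (γ : ∀ i : Fin s, (ZMod (l i))ˣ)
    (hp : p.Prime) (hl : ∀ i, 1 < l i)
    (hfo : ∀ i, addOrderOf (f i) = p)
    (hco : ∀ i, addOrderOf (c i) = l i)
    (hγo : ∀ i, orderOf (γ i) = p)
    (hcomm : ∀ i, f i + c i = ((γ i : ZMod (l i)).val) • c i + f i) :
    (∀ μ : ZMod p, Function.Bijective (braceAlpha f γ μ)) ∧
    (∀ (μ : ZMod p) (x y : BraceT p s l nn),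
        braceAlpha f γ μ (x + y) = braceAlpha f γ μ x + braceAlpha f γ μ y) ∧
    (∀ (μ : ZMod p) (x y : BraceT p s l nn),
        braceAlpha f γ μ (braceTmul c x y) =
          braceTmul c (braceAlpha f γ μ x) (braceAlpha f γ μ y)) ∧
    (braceAlpha (l := l) f γ (0 : ZMod p) = id) ∧
    (∀ μ ν : ZMod p,
        braceAlpha (l := l) f γ (μ + ν) = braceAlpha f γ μ ∘ braceAlpha f γ ν) := by
  have : NeZero p := ⟨hp.ne_zero⟩
  have : ∀ i, NeZero (l i) := fun i => ⟨by have := hl i; omega⟩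
  exact ⟨braceAlpha_bijective f γ hfo hγo, braceAlpha_map_add f γ,
    braceAlpha_map_braceTmul c f γ hco hcomm, braceAlpha_zero f γ,
    braceAlpha_add_eq_comp f γ hfo hγo⟩

/-- the map `α : (Z/(p),+) → Aut(T,+,·)`, `μ ↦ α_μ`, is a well-defined
homomorphism of groups; in particular each `α_μ` is an automorphism of the left
brace `T`. -/
theorem braceAlpha_is_hom
    (p s : ℕ) (l nn : Fin s → ℕ)
    (c f : ∀ i : Fin s, AddAut (BraceVec p (nn i)))
    (γ : ∀ i : Fin s, (ZMod (l i))ˣ)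
    (hp : p.Prime) (hl : ∀ i, 1 < l i)
    (hdiv : ∀ q : ℕ, q.Prime → q ∣ ∏ i, l i → p ∣ q - 1)
    (hfo : ∀ i, addOrderOf (f i) = p)
    (hco : ∀ i, addOrderOf (c i) = l i)
    (hγo : ∀ i, orderOf (γ i) = p)
    (hcomm : ∀ i, f i + c i = ((γ i : ZMod (l i)).val) • c i + f i) :
    (∀ μ : ZMod p, Function.Bijective (braceAlpha f γ μ)) ∧
    (∀ (μ : ZMod p) (x y : BraceT p s l nn),
        braceAlpha f γ μ (x + y) = braceAlpha f γ μ x + braceAlpha f γ μ y) ∧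
    (∀ (μ : ZMod p) (x y : BraceT p s l nn),
        braceAlpha f γ μ (braceTmul c x y) =
          braceTmul c (braceAlpha f γ μ x) (braceAlpha f γ μ y)) ∧
    (braceAlpha (l := l) f γ (0 : ZMod p) = id) ∧
    (∀ μ ν : ZMod p,
        braceAlpha (l := l) f γ (μ + ν) = braceAlpha f γ μ ∘ braceAlpha f γ ν) :=
  braceAlpha_is_hom_general p s l nn c f γ hp hl hfo hco hγo hcomm
end

section
/- With notation as in the context, the set I' = { (w₁,…,w_s, a₁,…,a_s, μ) : w_i ∈ im(c_i − id) + im(f_i − id) for i = 1,…,s, a_i ∈ Z/(l_i), μ ∈ Z/(p) } is an ideal of the left brace B = T ⋊∘ Z/(p). -/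
/-- The underlying set of the asymmetric product `B = T ⋊∘ Z/(p)`. -/
abbrev BraceB (p s : ℕ) (l nn : Fin s → ℕ) : Type := BraceT p s l nn × ZMod p

/-- The symmetric bilinear form `b((u,a),(v,a')) = Σ_{i} b_i(u_i,v_i)` on `T`. -/
def braceBil {p s : ℕ} {l nn : Fin s → ℕ}
    (bi : ∀ i : Fin s, BraceVec p (nn i) → BraceVec p (nn i) → ZMod p)
    (x y : BraceT p s l nn) : ZMod p :=
  ∑ i : Fin s, bi i (x.1 i) (y.1 i)

/-- Addition of the asymmetric product `B = T ⋊∘ Z/(p)`. -/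
def braceBadd {p s : ℕ} {l nn : Fin s → ℕ}
    (bi : ∀ i : Fin s, BraceVec p (nn i) → BraceVec p (nn i) → ZMod p)
    (x y : BraceB p s l nn) : BraceB p s l nn :=
  (x.1 + y.1, x.2 + y.2 + braceBil bi x.1 y.1)

/-- Additive inverse in the asymmetric product `B = T ⋊∘ Z/(p)`. -/
def braceBneg {p s : ℕ} {l nn : Fin s → ℕ}
    (bi : ∀ i : Fin s, BraceVec p (nn i) → BraceVec p (nn i) → ZMod p)
    (x : BraceB p s l nn) : BraceB p s l nn :=
  (-x.1, -x.2 - braceBil bi x.1 (-x.1))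

/-- Multiplication of the asymmetric product `B = T ⋊∘ Z/(p)`. -/
def braceBmul {p s : ℕ} {l nn : Fin s → ℕ}
    (c f : ∀ i : Fin s, AddAut (BraceVec p (nn i)))
    (γ : ∀ i : Fin s, (ZMod (l i))ˣ)
    (x y : BraceB p s l nn) : BraceB p s l nn :=
  (braceTmul c x.1 (braceAlpha f γ x.2 y.1), x.2 + y.2)

/-- An ideal of the left brace `B = T ⋊∘ Z/(p)`: a normal subgroup of `(B,·)` closed
under all the lambda maps `λ_a(x) = a·x − a`.  (Closure under multiplicative inverses
and conjugation is phrased via the defining equation of the inverse.) -/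
def IsIdealBraceB {p s : ℕ} {l nn : Fin s → ℕ}
    (bi : ∀ i : Fin s, BraceVec p (nn i) → BraceVec p (nn i) → ZMod p)
    (c f : ∀ i : Fin s, AddAut (BraceVec p (nn i)))
    (γ : ∀ i : Fin s, (ZMod (l i))ˣ)
    (N : Set (BraceB p s l nn)) : Prop :=
  ((0 : BraceT p s l nn), (0 : ZMod p)) ∈ N ∧
  (∀ x ∈ N, ∀ y ∈ N, braceBmul c f γ x y ∈ N) ∧
  (∀ x ∈ N, ∀ y : BraceB p s l nn,
      braceBmul c f γ x y = ((0 : BraceT p s l nn), (0 : ZMod p)) → y ∈ N) ∧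
  (∀ g : BraceB p s l nn, ∀ x ∈ N, ∀ g' : BraceB p s l nn,
      braceBmul c f γ g g' = ((0 : BraceT p s l nn), (0 : ZMod p)) →
      braceBmul c f γ (braceBmul c f γ g x) g' ∈ N) ∧
  (∀ a : BraceB p s l nn, ∀ x ∈ N,
      braceBadd bi (braceBmul c f γ a x) (braceBneg bi a) ∈ N)

/-!
In the `i`-th vector coordinate, left multiplication by `(u, a, μ)` is
`w ↦ u_i + c_i^{a_i}(f_i^μ w)` and the additive inverse of `B` is negation.  Every automorphism
in the group generated by `c_i` and `f_i` moves each vector by an element of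
`W_i = im(c_i − id) + im(f_i − id)`, so `W_i` is stable under these automorphisms, and all
conditions defining an ideal reduce to `W_i` being an additive subgroup.
-/

namespace AddAut

variable {G : Type*} [AddCommGroup G] {H : AddSubgroup G}

theorem add_apply_sub_mem {g h : AddAut G} (hg : ∀ w, g w - w ∈ H) (hh : ∀ w, h w - w ∈ H)
    (w : G) : (g + h) w - w ∈ H := by
  have hsplit : (g + h) w - w = (g (h w) - h w) + (h w - w) := by
    rw [add_apply]; abel
  rw [hsplit]
  exact H.add_mem (hg _) (hh w)

theorem nsmul_apply_sub_mem {g : AddAut G} (hg : ∀ w, g w - w ∈ H) (k : ℕ) (w : G) :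
    (k • g) w - w ∈ H := by
  induction k generalizing w with
  | zero => simp
  | succ k ih => rw [succ_nsmul']; exact add_apply_sub_mem hg ih w

theorem apply_mem_iff_of_sub_mem {g : AddAut G} (hg : ∀ w, g w - w ∈ H) {w : G} :
    g w ∈ H ↔ w ∈ H := by
  constructor
  · intro h
    simpa using H.sub_mem h (hg w)
  · intro h
    simpa using H.add_mem (hg w) h

def displacementSubgroup (C F : AddAut G) : AddSubgroup G :=
  (C.toAddMonoidHom - AddMonoidHom.id G).range ⊔ (F.toAddMonoidHom - AddMonoidHom.id G).range

theorem mem_displacementSubgroup_iff {C F : AddAut G} {w : G} :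
    w ∈ displacementSubgroup C F ↔ ∃ u v, w = (C u - u) + (F v - v) := by
  simp only [displacementSubgroup, AddSubgroup.mem_sup, AddMonoidHom.mem_range,
    AddMonoidHom.sub_apply, AddEquiv.coe_toAddMonoidHom, AddMonoidHom.id_apply]
  constructor
  · rintro ⟨_, ⟨u, rfl⟩, _, ⟨v, rfl⟩, rfl⟩
    exact ⟨u, v, rfl⟩
  · rintro ⟨u, v, rfl⟩
    exact ⟨_, ⟨u, rfl⟩, _, ⟨v, rfl⟩, rfl⟩

theorem apply_sub_mem_displacementSubgroup_left (C F : AddAut G) (w : G) :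
    C w - w ∈ displacementSubgroup C F :=
  mem_displacementSubgroup_iff.2 ⟨w, 0, by simp⟩

theorem apply_sub_mem_displacementSubgroup_right (C F : AddAut G) (w : G) :
    F w - w ∈ displacementSubgroup C F :=
  mem_displacementSubgroup_iff.2 ⟨0, w, by simp⟩

end AddAut

section BraceIdeal

variable {p s : ℕ} {l nn : Fin s → ℕ} (c f : ∀ i : Fin s, AddAut (BraceVec p (nn i)))
  (γ : ∀ i : Fin s, (ZMod (l i))ˣ)

/-- `c_i^{a_i} ∘ f_i^μ` for `x = (u, a, μ)`. -/
def braceBcoordAut (x : BraceB p s l nn) (i : Fin s) : AddAut (BraceVec p (nn i)) :=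
  (x.1.2 i).val • c i + x.2.val • f i

theorem braceBmul_fst_fst_apply (x y : BraceB p s l nn) (i : Fin s) :
    (braceBmul c f γ x y).1.1 i = x.1.1 i + braceBcoordAut c f x i (y.1.1 i) :=
  rfl

theorem isIdealBraceB_of_apply_sub_mem
    (bi : ∀ i : Fin s, BraceVec p (nn i) → BraceVec p (nn i) → ZMod p)
    (H : ∀ i, AddSubgroup (BraceVec p (nn i)))
    (hc : ∀ i w, c i w - w ∈ H i) (hf : ∀ i w, f i w - w ∈ H i) :
    IsIdealBraceB bi c f γ {x : BraceB p s l nn | ∀ i, x.1.1 i ∈ H i} := by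
  have hcoord : ∀ (x : BraceB p s l nn) i w, braceBcoordAut c f x i w - w ∈ H i := fun x i =>
    AddAut.add_apply_sub_mem (AddAut.nsmul_apply_sub_mem (hc i) _)
      (AddAut.nsmul_apply_sub_mem (hf i) _)
  have hcoord_mem : ∀ (x : BraceB p s l nn) i {w},
      braceBcoordAut c f x i w ∈ H i ↔ w ∈ H i := fun x i _ =>
    AddAut.apply_mem_iff_of_sub_mem (hcoord x i)
  refine ⟨fun i => (H i).zero_mem, ?_, ?_, ?_, ?_⟩
  · intro x hx y hy i
    exact (H i).add_mem (hx i) ((hcoord_mem x i).2 (hy i))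
  · intro x hx y hxy i
    have hi : x.1.1 i + braceBcoordAut c f x i (y.1.1 i) = 0 :=
      congrFun (congrArg (fun z : BraceB p s l nn => z.1.1) hxy) i
    rw [← hcoord_mem x i, eq_neg_of_add_eq_zero_right hi]
    exact (H i).neg_mem (hx i)
  · intro g x hx g' hgg' i
    have hi : g.1.1 i + braceBcoordAut c f g i (g'.1.1 i) = 0 :=
      congrFun (congrArg (fun z : BraceB p s l nn => z.1.1) hgg') i
    set z := g'.1.1 i
    have hsplit : (braceBmul c f γ (braceBmul c f γ g x) g').1.1 i =
        braceBcoordAut c f g i (x.1.1 i) +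
          ((braceBcoordAut c f (braceBmul c f γ g x) i z - z) -
            (braceBcoordAut c f g i z - z)) := by
      rw [braceBmul_fst_fst_apply, braceBmul_fst_fst_apply, eq_neg_of_add_eq_zero_left hi]
      abel
    rw [hsplit]
    exact (H i).add_mem ((hcoord_mem g i).2 (hx i))
      ((H i).sub_mem (hcoord _ i z) (hcoord g i z))
  · intro a x hx i
    have hlam : (braceBadd bi (braceBmul c f γ a x) (braceBneg bi a)).1.1 i =
        braceBcoordAut c f a i (x.1.1 i) := by
      show a.1.1 i + _ + -a.1.1 i = _
      abel
    rw [hlam]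
    exact (hcoord_mem a i).2 (hx i)

end BraceIdeal

theorem braceB_ideal_general
    (p s : ℕ) (l nn : Fin s → ℕ)
    (c f : ∀ i : Fin s, AddAut (BraceVec p (nn i)))
    (γ : ∀ i : Fin s, (ZMod (l i))ˣ)
    (bi : ∀ i : Fin s, BraceVec p (nn i) → BraceVec p (nn i) → ZMod p) :
    IsIdealBraceB bi c f γ
      {x : BraceB p s l nn | ∀ i : Fin s, ∃ u v : BraceVec p (nn i),
        x.1.1 i = ((c i) u - u) + ((f i) v - v)} := by
  simp_rw [← AddAut.mem_displacementSubgroup_iff]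
  exact isIdealBraceB_of_apply_sub_mem c f γ bi _
    (fun i => AddAut.apply_sub_mem_displacementSubgroup_left (c i) (f i))
    (fun i => AddAut.apply_sub_mem_displacementSubgroup_right (c i) (f i))

/-- the set
`I' = {(w,a,μ) : w_i ∈ im(c_i − id) + im(f_i − id)}` is an ideal of the left brace
`B = T ⋊∘ Z/(p)`. -/
theorem braceB_ideal
    (p s : ℕ) (l nn : Fin s → ℕ)
    (c f : ∀ i : Fin s, AddAut (BraceVec p (nn i)))
    (γ : ∀ i : Fin s, (ZMod (l i))ˣ)
    (bi : ∀ i : Fin s, BraceVec p (nn i) → BraceVec p (nn i) → ZMod p)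
    (hp : p.Prime) (hl : ∀ i, 1 < l i)
    (hdiv : ∀ q : ℕ, q.Prime → q ∣ ∏ i, l i → p ∣ q - 1)
    (hfo : ∀ i, addOrderOf (f i) = p)
    (hco : ∀ i, addOrderOf (c i) = l i)
    (hγo : ∀ i, orderOf (γ i) = p)
    (hcomm : ∀ i, f i + c i = ((γ i : ZMod (l i)).val) • c i + f i)
    (hγ1 : ∀ i, IsUnit ((γ i : ZMod (l i)) - 1))
    (hbsymm : ∀ i, ∀ u v : BraceVec p (nn i), bi i u v = bi i v u)
    (hbadd : ∀ i, ∀ u u' v : BraceVec p (nn i), bi i (u + u') v = bi i u v + bi i u' v)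
    (hbnd : ∀ i, ∀ u : BraceVec p (nn i), (∀ v, bi i u v = 0) → u = 0)
    (hbc : ∀ i, ∀ u v : BraceVec p (nn i), bi i (c i u) (c i v) = bi i u v)
    (hbf : ∀ i, ∀ u v : BraceVec p (nn i), bi i (f i u) (f i v) = bi i u v) :
    IsIdealBraceB bi c f γ
      {x : BraceB p s l nn | ∀ i : Fin s, ∃ u v : BraceVec p (nn i),
        x.1.1 i = ((c i) u - u) + ((f i) v - v)} :=
  braceB_ideal_general p s l nn c f γ bi
end

section
/- Let p be a prime and let l ≥ 2 be an integer with l ≡ 1 (mod p). Let R = F_p[X]/(X^{l−1} + X^{l−2} + ⋯ + X + 1) and let ξ be the class of X in R. Then the F_p-linear map c − id : R → R, r ↦ ξ·r − r, is bijective; that is, c − id is invertible, where c is the map of multiplication by ξ on R. -/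
/-- let `p` be a prime and `l ≥ 2` with `l ≡ 1 (mod p)`.  In
`R = F_p[X]/(X^{l−1} + ⋯ + X + 1)` with `ξ` the class of `X`, the `F_p`-linear map
`c − id : r ↦ ξ·r − r` is bijective. -/
theorem mul_xi_sub_id_bijective (p : ℕ) (hp : p.Prime) (l : ℕ) (hl : 2 ≤ l)
    (hmod : l ≡ 1 [MOD p]) :
    Function.Bijective
      (fun r : Polynomial (ZMod p) ⧸
          Ideal.span {∑ i ∈ Finset.range l, (Polynomial.X : Polynomial (ZMod p)) ^ i} =>
        Ideal.Quotient.mk _ (Polynomial.X : Polynomial (ZMod p)) * r - r) := by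
  haveI : Fact p.Prime := ⟨hp⟩
  set f : Polynomial (ZMod p) := ∑ i ∈ Finset.range l, (Polynomial.X : Polynomial (ZMod p)) ^ i
    with hf
  have heval : f.eval 1 = 1 := by
    have : (l : ZMod p) = (1 : ℕ) := (ZMod.natCast_eq_natCast_iff _ _ _).2 hmod
    simp [hf, Polynomial.eval_finset_sum, this]
  have hndvd : ¬ (Polynomial.X - Polynomial.C (1 : ZMod p)) ∣ f := by
    intro h
    have := Polynomial.dvd_iff_isRoot.mp h
    rw [Polynomial.IsRoot, heval] at this
    exact one_ne_zero this
  have hcop : IsCoprime (Polynomial.X - Polynomial.C (1 : ZMod p)) f :=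
    (Polynomial.irreducible_X_sub_C (1 : ZMod p)).coprime_iff_not_dvd.2 hndvd
  set π := Ideal.Quotient.mk (Ideal.span {f})
  have hf0 : π f = 0 :=
    Ideal.Quotient.eq_zero_iff_mem.2 (Ideal.mem_span_singleton_self f)
  have hcop' : IsCoprime (π (Polynomial.X - Polynomial.C 1)) (π f) := hcop.map π
  rw [hf0, isCoprime_zero_right] at hcop'
  have hu : IsUnit (π Polynomial.X - 1) := by
    simpa [map_sub] using hcop'
  have := IsUnit.isUnit_iff_mulLeft_bijective.mp hu
  have heq : (fun r => π Polynomial.X * r - r) = (fun r => (π Polynomial.X - 1) * r) := by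
    funext r; ring
  rw [heq]
  exact this
end

section
/- Let p be a prime, let r and n be positive integers, let f be an automorphism of the abelian group (Z/(p^r))^n with f^{p^r} = id (so that powers f^μ are well defined for μ ∈ Z/(p^r)), and let Q : (Z/(p^r))^n → Z/(p^r) be a map such that Q∘f = Q and such that b(x,y) := Q(x+y) − Q(x) − Q(y) is additive in each variable. Let H be the set (Z/(p^r))^n × Z/(p^r) with componentwise addition and multiplication (x,μ)·(y,μ') = (x + f^{μ−Q(x)}(y), μ + μ' + b(x, f^{μ−Q(x)}(y))), and let H' be the set (Z/(p^r))^n × Z/(p^r) with addition (x,μ)+(y,μ') = (x+y, μ+μ'−b(x,y)) and multiplication (x,μ)·(y,μ') = (x + f^μ(y), μ+μ'). Then the map φ : H → H' defined by φ(x,μ) = (x, μ − Q(x)) is a bijection satisfying φ(u + v) = φ(u) + φ(v) and φ(u·v) = φ(u)·φ(v) for all u,v ∈ H; that is, φ is an isomorphism of left braces from H = H(p^r,n,Q,f) onto the asymmetric product H' = H'(p^r,n,−b,f). -/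
/-! The shear `(x, μ) ↦ (x, μ - Q x)` is a bijection. It turns the componentwise sum into the sum
twisted by `-b` because `b` is exactly the defect of additivity of `Q`. It turns the product of
`H` into that of `H'` because `Q` is invariant under every power `f^k`: adding `b(x, f^k y)` and
then subtracting `Q(x + f^k y)` amounts to subtracting `Q x + Q (f^k y) = Q x + Q y`. -/

namespace AddAut

variable {A : Type*} [Add A]

theorem coe_nsmul (f : AddAut A) (k : ℕ) : ⇑(k • f) = f^[k] := by
  induction k with
  | zero => rfl
  | succ k ih =>
    funext x
    rw [succ_nsmul, Function.iterate_succ_apply, ← ih]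
    rfl

theorem comp_nsmul_of_comp_eq {β : Type*} {f : AddAut A} {Q : A → β} (h : Q ∘ f = Q) (k : ℕ) :
    Q ∘ ⇑(k • f) = Q := by
  rw [coe_nsmul]
  exact Function.iterate_invariant h k

end AddAut

theorem H_iso_asymmetric_product_general
    (p r n : ℕ)
    (f : AddAut (Fin n → ZMod (p ^ r)))
    (Q : (Fin n → ZMod (p ^ r)) → ZMod (p ^ r))
    (hQf : ∀ x, Q (f x) = Q x) :
    let b : (Fin n → ZMod (p ^ r)) → (Fin n → ZMod (p ^ r)) → ZMod (p ^ r) :=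
      fun x y => Q (x + y) - Q x - Q y
    -- the left brace H(p^r,n,Q,f):
    let addH : ((Fin n → ZMod (p ^ r)) × ZMod (p ^ r)) →
        ((Fin n → ZMod (p ^ r)) × ZMod (p ^ r)) → ((Fin n → ZMod (p ^ r)) × ZMod (p ^ r)) :=
      fun u v => (u.1 + v.1, u.2 + v.2)
    let mulH : ((Fin n → ZMod (p ^ r)) × ZMod (p ^ r)) →
        ((Fin n → ZMod (p ^ r)) × ZMod (p ^ r)) → ((Fin n → ZMod (p ^ r)) × ZMod (p ^ r)) :=
      fun u v => (u.1 + ((u.2 - Q u.1).val • f) v.1,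
        u.2 + v.2 + b u.1 (((u.2 - Q u.1).val • f) v.1))
    -- the asymmetric product H'(p^r,n,−b,f):
    let addH' : ((Fin n → ZMod (p ^ r)) × ZMod (p ^ r)) →
        ((Fin n → ZMod (p ^ r)) × ZMod (p ^ r)) → ((Fin n → ZMod (p ^ r)) × ZMod (p ^ r)) :=
      fun u v => (u.1 + v.1, u.2 + v.2 - b u.1 v.1)
    let mulH' : ((Fin n → ZMod (p ^ r)) × ZMod (p ^ r)) →
        ((Fin n → ZMod (p ^ r)) × ZMod (p ^ r)) → ((Fin n → ZMod (p ^ r)) × ZMod (p ^ r)) :=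
      fun u v => (u.1 + (u.2.val • f) v.1, u.2 + v.2)
    let φ : ((Fin n → ZMod (p ^ r)) × ZMod (p ^ r)) →
        ((Fin n → ZMod (p ^ r)) × ZMod (p ^ r)) :=
      fun u => (u.1, u.2 - Q u.1)
    Function.Bijective φ ∧
    (∀ u v, φ (addH u v) = addH' (φ u) (φ v)) ∧
    (∀ u v, φ (mulH u v) = mulH' (φ u) (φ v)) := by
  intro b addH mulH addH' mulH' φ
  refine ⟨(Equiv.prodShear (Equiv.refl _) fun x => Equiv.subRight (Q x)).bijective, ?_, ?_⟩
  · rintro ⟨x, μ⟩ ⟨y, ν⟩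
    refine Prod.ext rfl ?_
    simp only [φ, addH, addH', b]
    abel
  · rintro ⟨x, μ⟩ ⟨y, ν⟩
    have hQ : Q (((μ - Q x).val • f) y) = Q y :=
      congrFun (AddAut.comp_nsmul_of_comp_eq (funext hQf) _) y
    refine Prod.ext rfl ?_
    simp only [φ, mulH, mulH', b, hQ]
    abel

/-- the map `φ(x,μ) = (x, μ − Q(x))` is an isomorphism of left braces
from `H = H(p^r,n,Q,f)` onto the asymmetric product `H' = H'(p^r,n,−b,f)`, where
`b(x,y) = Q(x+y) − Q(x) − Q(y)`. -/
theorem H_iso_asymmetric_product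
    (p r n : ℕ) (hp : p.Prime) (hr : 0 < r) (hn : 0 < n)
    (f : AddAut (Fin n → ZMod (p ^ r))) (hf : (p ^ r) • f = 0)
    (Q : (Fin n → ZMod (p ^ r)) → ZMod (p ^ r))
    (hQf : ∀ x, Q (f x) = Q x)
    (hbadd : ∀ x y z : Fin n → ZMod (p ^ r),
      (Q ((x + y) + z) - Q (x + y) - Q z) =
        (Q (x + z) - Q x - Q z) + (Q (y + z) - Q y - Q z)) :
    let b : (Fin n → ZMod (p ^ r)) → (Fin n → ZMod (p ^ r)) → ZMod (p ^ r) :=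
      fun x y => Q (x + y) - Q x - Q y
    -- the left brace H(p^r,n,Q,f):
    let addH : ((Fin n → ZMod (p ^ r)) × ZMod (p ^ r)) →
        ((Fin n → ZMod (p ^ r)) × ZMod (p ^ r)) → ((Fin n → ZMod (p ^ r)) × ZMod (p ^ r)) :=
      fun u v => (u.1 + v.1, u.2 + v.2)
    let mulH : ((Fin n → ZMod (p ^ r)) × ZMod (p ^ r)) →
        ((Fin n → ZMod (p ^ r)) × ZMod (p ^ r)) → ((Fin n → ZMod (p ^ r)) × ZMod (p ^ r)) :=
      fun u v => (u.1 + ((u.2 - Q u.1).val • f) v.1,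
        u.2 + v.2 + b u.1 (((u.2 - Q u.1).val • f) v.1))
    -- the asymmetric product H'(p^r,n,−b,f):
    let addH' : ((Fin n → ZMod (p ^ r)) × ZMod (p ^ r)) →
        ((Fin n → ZMod (p ^ r)) × ZMod (p ^ r)) → ((Fin n → ZMod (p ^ r)) × ZMod (p ^ r)) :=
      fun u v => (u.1 + v.1, u.2 + v.2 - b u.1 v.1)
    let mulH' : ((Fin n → ZMod (p ^ r)) × ZMod (p ^ r)) →
        ((Fin n → ZMod (p ^ r)) × ZMod (p ^ r)) → ((Fin n → ZMod (p ^ r)) × ZMod (p ^ r)) :=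
      fun u v => (u.1 + (u.2.val • f) v.1, u.2 + v.2)
    let φ : ((Fin n → ZMod (p ^ r)) × ZMod (p ^ r)) →
        ((Fin n → ZMod (p ^ r)) × ZMod (p ^ r)) :=
      fun u => (u.1, u.2 - Q u.1)
    Function.Bijective φ ∧
    (∀ u v, φ (addH u v) = addH' (φ u) (φ v)) ∧
    (∀ u v, φ (mulH u v) = mulH' (φ u) (φ v)) :=
  H_iso_asymmetric_product_general p r n f Q hQf
end

section
/- Let q and p be prime numbers such that p divides q − 1, let n be a positive integer, and let c be a permutation in the symmetric group S_n of order q. Let γ be an integer whose class in the multiplicative group (Z/(q))* has order p. Then there exists a permutation f ∈ S_n of order p such that f·c·f⁻¹ = c^γ. -/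
/-!
On the cycle of a point `r`, the map `c ^ k r ↦ c ^ (v * k) r` is well defined for every integer
`v` (the exponents `k` with `c ^ k r = x` form a coset of an ideal of `ℤ`) and intertwines `c`
with `c ^ v`. These maps multiply like their exponents and only depend on `v`
modulo `orderOf c`, so they give a homomorphism from `(ZMod (orderOf c))ˣ` to the permutations,
and it is injective because the image of `u` conjugates `c` to `c ^ u`. The image of the class of
`γ` therefore has the same order as that class.
-/

namespace Equiv.Perm

variable {α : Type*} (c : Perm α)

noncomputable def cycleRep (x : α) : α :=
  Quotient.out (s := SameCycle.setoid c) (Quotient.mk _ x)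

theorem sameCycle_cycleRep (x : α) : SameCycle c (cycleRep c x) x :=
  Quotient.mk_out (s := SameCycle.setoid c) x

theorem cycleRep_eq_of_sameCycle {x y : α} (h : SameCycle c x y) : cycleRep c x = cycleRep c y :=
  congrArg Quotient.out (Quotient.sound (s := SameCycle.setoid c) h)

theorem cycleRep_cycleRep (x : α) : cycleRep c (cycleRep c x) = cycleRep c x :=
  cycleRep_eq_of_sameCycle c (sameCycle_cycleRep c x)

noncomputable def cycleExp (x : α) : ℤ := (sameCycle_cycleRep c x).choose

theorem zpow_cycleExp_apply_cycleRep (x : α) : (c ^ cycleExp c x) (cycleRep c x) = x :=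
  (sameCycle_cycleRep c x).choose_spec

theorem zpow_mul_apply_eq_of_zpow_apply_eq {a b : ℤ} {x : α} (h : (c ^ a) x = (c ^ b) x)
    (v : ℤ) : (c ^ (v * a)) x = (c ^ (v * b)) x := by
  have hfix : Function.IsFixedPt (c ^ (a - b)) x := by
    rw [Function.IsFixedPt, sub_eq_neg_add, zpow_add, mul_apply, h, ← mul_apply, ← zpow_add,
      neg_add_cancel, zpow_zero, one_apply]
  rw [show v * a = v * b + (a - b) * v by ring, zpow_add, mul_apply, zpow_mul c (a - b),
    (hfix.perm_zpow v).eq]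

noncomputable def cycleScale (v : ℤ) (x : α) : α :=
  (c ^ (v * cycleExp c x)) (cycleRep c x)

theorem cycleScale_zpow_apply_cycleRep (v m : ℤ) (x : α) :
    cycleScale c v ((c ^ m) (cycleRep c x)) = (c ^ (v * m)) (cycleRep c x) := by
  have hrep : cycleRep c ((c ^ m) (cycleRep c x)) = cycleRep c x := by
    rw [← cycleRep_eq_of_sameCycle c ⟨m, rfl⟩, cycleRep_cycleRep]
  have hexp := zpow_cycleExp_apply_cycleRep c ((c ^ m) (cycleRep c x))
  rw [hrep] at hexp
  rw [cycleScale, hrep, zpow_mul_apply_eq_of_zpow_apply_eq c hexp]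

theorem cycleScale_one (x : α) : cycleScale c 1 x = x := by
  rw [cycleScale, one_mul, zpow_cycleExp_apply_cycleRep]

theorem cycleScale_cycleScale (v w : ℤ) (x : α) :
    cycleScale c v (cycleScale c w x) = cycleScale c (v * w) x := by
  rw [cycleScale.eq_1 c w, cycleScale_zpow_apply_cycleRep, cycleScale, mul_assoc]

theorem cycleScale_apply_self (v : ℤ) (x : α) :
    cycleScale c v (c x) = (c ^ v) (cycleScale c v x) := by
  conv_lhs => rw [← zpow_cycleExp_apply_cycleRep c x, ← mul_apply, ← zpow_one_add,
    cycleScale_zpow_apply_cycleRep]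
  rw [cycleScale, ← mul_apply, ← zpow_add, mul_one_add]

theorem cycleScale_congr {v w : ℤ} (h : (v : ZMod (orderOf c)) = w) :
    cycleScale c v = cycleScale c w := by
  have hmod : v ≡ w [ZMOD orderOf c] := (ZMod.intCast_eq_intCast_iff _ _ _).1 h
  ext x
  rw [cycleScale, cycleScale, zpow_eq_zpow_iff_modEq.2 (hmod.mul_right _)]

noncomputable def cycleScaleHom : ZMod (orderOf c) →* Function.End α where
  toFun a := cycleScale c (a.cast : ℤ)
  map_one' := by
    rw [cycleScale_congr c (v := (1 : ZMod (orderOf c)).cast) (w := 1) (by simp)]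
    exact funext (cycleScale_one c)
  map_mul' a b := by
    rw [cycleScale_congr c (v := (a * b).cast) (w := a.cast * b.cast) (by simp)]
    exact (funext (cycleScale_cycleScale c _ _ ·)).symm

noncomputable def cycleScalePerm : (ZMod (orderOf c))ˣ →* Perm α :=
  ((cycleScaleHom c).comp (Units.coeHom _)).toHomPerm

theorem cycleScalePerm_apply (u : (ZMod (orderOf c))ˣ) (x : α) :
    cycleScalePerm c u x = cycleScale c (u : ZMod (orderOf c)).cast x :=
  rfl

theorem cycleScalePerm_mul_mul_inv (u : (ZMod (orderOf c))ˣ) :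
    cycleScalePerm c u * c * (cycleScalePerm c u)⁻¹ =
      c ^ ((u : ZMod (orderOf c)).cast : ℤ) := by
  rw [mul_inv_eq_iff_eq_mul]
  ext x
  simp only [mul_apply, cycleScalePerm_apply, cycleScale_apply_self]

theorem cycleScalePerm_injective : Function.Injective (cycleScalePerm c) := by
  rw [injective_iff_map_eq_one]
  intro u hu
  have hc : c ^ (1 : ℤ) = c ^ ((u : ZMod (orderOf c)).cast : ℤ) := by
    rw [← cycleScalePerm_mul_mul_inv, hu, one_mul, inv_one, mul_one, zpow_one]
  rw [zpow_eq_zpow_iff_modEq, ← ZMod.intCast_eq_intCast_iff, ZMod.intCast_zmod_cast] at hc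
  exact Units.ext (by simpa using hc.symm)

end Equiv.Perm

open Equiv.Perm in
theorem exists_perm_conjugating_to_power_general
    (q p : ℕ)
    (n : ℕ)
    (c : Equiv.Perm (Fin n)) (hc : orderOf c = q)
    (γ : ℤ) (u : (ZMod q)ˣ) (huγ : (u : ZMod q) = (γ : ZMod q)) (hu : orderOf u = p) :
    ∃ f : Equiv.Perm (Fin n), orderOf f = p ∧ f * c * f⁻¹ = c ^ γ := by
  subst hc hu
  refine ⟨cycleScalePerm c u, orderOf_injective _ (cycleScalePerm_injective c) u, ?_⟩
  rw [cycleScalePerm_mul_mul_inv, zpow_eq_zpow_iff_modEq, ← ZMod.intCast_eq_intCast_iff,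
    ZMod.intCast_zmod_cast, huγ]

/-- let `q, p` be primes with `p ∣ q − 1`, let `c ∈ S_n` have order `q`,
and let `γ` be an integer whose class in `(Z/(q))*` has multiplicative order `p`.
Then there is a permutation `f ∈ S_n` of order `p` with `f·c·f⁻¹ = c^γ`. -/
theorem exists_perm_conjugating_to_power
    (q p : ℕ) (hq : q.Prime) (hp : p.Prime) (hpq : p ∣ q - 1)
    (n : ℕ) (hn : 0 < n)
    (c : Equiv.Perm (Fin n)) (hc : orderOf c = q)
    (γ : ℤ) (u : (ZMod q)ˣ) (huγ : (u : ZMod q) = (γ : ZMod q)) (hu : orderOf u = p) :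
    ∃ f : Equiv.Perm (Fin n), orderOf f = p ∧ f * c * f⁻¹ = c ^ γ :=
  exists_perm_conjugating_to_power_general q p n c hc γ u huγ hu
end
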